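/- arXiv:2105.11323 — 11 statements merged into one kernel-verified Lean document; each statement's English description precedes it below -/
import Mathlib

section
/- Let m, n ∈ ℕ with m dividing n and n/m odd. Let g ∈ F_{2^n}[x] be any polynomial, a ∈ F_{2^m} with Tr_m(a) ≠ 0, and h(x) = x² + x + a. Then f(x) = (x² + x)·h(Tr^n_m(x)) + g(Tr^n_m(x))^{2^m} + g(Tr^n_m(x)) is a 2-to-1 mapping on F_{2^n}. -/
noncomputable def eAux {F : Type*} [Field F] (g : Polynomial F) (a : F) (tr : F → F)
    (x : F) : F :=
  (g.eval (tr x) + g.eval (tr x + 1)) / ((tr x) ^ 2 + tr x + a)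

noncomputable def wAux {F : Type*} [Field F] (m : ℕ) (g : Polynomial F) (a : F) (tr : F → F)
    (x : F) : F :=
  ∑ i ∈ Finset.range m, (eAux g a tr x) ^ (2 ^ i)

noncomputable def piMap {F : Type*} [Field F] (m : ℕ) (g : Polynomial F) (a : F) (tr : F → F)
    (x : F) : F :=
  x + wAux m g a tr x + (1 + tr (wAux m g a tr x))

/-- Corollary: `f(x) = (x²+x)·h(Tr^n_m(x)) + g(Tr^n_m(x))^{2^m} + g(Tr^n_m(x))` is 2-to-1
on `F_{2^n}`, where `h(x) = x² + x + a` with `Tr_m(a) ≠ 0`. -/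
theorem stmt5 {F : Type*} [Field F] [Fintype F] [DecidableEq F] (m n : ℕ)
    (hm : 0 < m) (hmn : m ∣ n) (hodd : Odd (n / m))
    (hcard : Fintype.card F = 2 ^ n)
    (g : Polynomial F) (a : F) (ha : a ^ (2 ^ m) = a)
    (htr : ∑ i ∈ Finset.range m, a ^ (2 ^ i) ≠ 0)
    (tr : F → F) (htrdef : ∀ x, tr x = ∑ i ∈ Finset.range (n / m), x ^ (2 ^ (m * i)))
    (f : F → F)
    (hf : ∀ x, f x = (x ^ 2 + x) * ((tr x) ^ 2 + tr x + a)
          + (g.eval (tr x)) ^ (2 ^ m) + g.eval (tr x)) :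
    ∀ b : F, (Finset.univ.filter (fun x : F => f x = b)).card = 2 ∨
             (Finset.univ.filter (fun x : F => f x = b)).card = 0 := by
  -- setup
  haveI hchar2 : CharP F 2 := by
    obtain ⟨p, hp'⟩ := CharP.exists F
    haveI := hp'
    have hp : p.Prime := CharP.char_is_prime F p
    have hdvd : p ∣ 2 ^ n := by
      rw [← hcard]
      exact (CharP.cast_eq_zero_iff F p _).mp (FiniteField.cast_card_eq_zero F)
    have hpe : p = 2 := (Nat.prime_dvd_prime_iff_eq hp Nat.prime_two).mp
      (hp.dvd_of_dvd_pow hdvd)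
    rwa [hpe] at hp'
  haveI := Fact.mk Nat.prime_two
  have h2 : (2 : F) = 0 := by exact_mod_cast CharP.cast_eq_zero F 2
  set k := n / m with hkdef
  have hmk : m * k = n := Nat.mul_div_cancel' hmn
  have hk : ∀ z : F, z ^ (2 ^ (m * k)) = z := by
    intro z; rw [hmk, ← hcard]; exact FiniteField.pow_card z
  have hpowpow : ∀ (z : F) (i j : ℕ), (z ^ (2 ^ i)) ^ (2 ^ j) = z ^ (2 ^ (i + j)) := by
    intro z i j; rw [← pow_mul, ← pow_add]
  -- basic trace lemmas
  have tr_add : ∀ x y : F, tr (x + y) = tr x + tr y := by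
    intro x y
    simp only [htrdef]
    rw [← Finset.sum_add_distrib]
    exact Finset.sum_congr rfl fun i _ => add_pow_char_pow x y 2 (m * i)
  have tr_pow : ∀ (z : F) (j : ℕ), tr (z ^ (2 ^ j)) = (tr z) ^ (2 ^ j) := by
    intro z j
    simp only [htrdef]
    rw [sum_pow_char_pow]
    exact Finset.sum_congr rfl fun i _ => by rw [hpowpow, hpowpow, Nat.add_comm]
  have tr_sq : ∀ z : F, tr (z ^ 2) = (tr z) ^ 2 := by
    intro z
    have h := tr_pow z 1
    norm_num at h
    exact h
  have tr_shift : ∀ z : F, tr (z ^ (2 ^ m)) = tr z := by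
    intro z
    simp only [htrdef]
    have h1 : ∀ i : ℕ, (z ^ (2 ^ m)) ^ (2 ^ (m * i)) = z ^ (2 ^ (m * (i + 1))) := by
      intro i; rw [hpowpow]; congr 2; rw [Nat.mul_succ, Nat.add_comm]
    calc ∑ i ∈ Finset.range k, (z ^ (2 ^ m)) ^ (2 ^ (m * i))
        = ∑ i ∈ Finset.range k, z ^ (2 ^ (m * (i + 1))) :=
          Finset.sum_congr rfl fun i _ => h1 i
      _ = ∑ i ∈ Finset.range k, z ^ (2 ^ (m * i)) := by
          have ha' := (Finset.sum_range_succ' (fun i => z ^ (2 ^ (m * i))) k).symm.trans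
            (Finset.sum_range_succ (fun i => z ^ (2 ^ (m * i))) k)
          simp only [Nat.mul_zero, pow_zero, pow_one, hk z] at ha'
          exact add_right_cancel ha'
  have tr_in : ∀ z : F, (tr z) ^ (2 ^ m) = tr z := by
    intro z; rw [← tr_pow, tr_shift]
  have pow_fix : ∀ c : F, c ^ (2 ^ m) = c → ∀ i : ℕ, c ^ (2 ^ (m * i)) = c := by
    intro c hc i
    induction i with
    | zero => simp
    | succ j ih => rw [Nat.mul_succ, pow_add, pow_mul, ih, hc]
  have tr_smul : ∀ c z : F, c ^ (2 ^ m) = c → tr (c * z) = c * tr z := by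
    intro c z hc
    simp only [htrdef]
    rw [Finset.mul_sum]
    exact Finset.sum_congr rfl fun i _ => by rw [mul_pow, pow_fix c hc i]
  have tr_one : tr 1 = 1 := by
    obtain ⟨j, hj⟩ := hodd
    rw [htrdef]
    simp only [one_pow, Finset.sum_const, Finset.card_range, nsmul_eq_mul, mul_one, ← hkdef, hj]
    push_cast
    linear_combination (j : F) * h2
  have tr_const : ∀ c : F, c ^ (2 ^ m) = c → tr c = c := by
    intro c hc
    have h := tr_smul c 1 hc
    rwa [mul_one, tr_one, mul_one] at h
  have tr_sum : ∀ (s : Finset ℕ) (c : ℕ → F),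
      tr (∑ j ∈ s, c j) = ∑ j ∈ s, tr (c j) := by
    intro s c
    simp only [htrdef]
    rw [Finset.sum_comm]
    exact Finset.sum_congr rfl fun i _ => sum_pow_char_pow 2 (m * i) s c
  -- telescoping lemmas
  have tele : ∀ z : F, (∑ i ∈ Finset.range m, z ^ (2 ^ i)) ^ 2 + ∑ i ∈ Finset.range m, z ^ (2 ^ i)
      = z ^ (2 ^ m) + z := by
    intro z
    have h1 : (∑ i ∈ Finset.range m, z ^ (2 ^ i)) ^ 2
        = ∑ i ∈ Finset.range m, z ^ (2 ^ (i + 1)) := by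
      rw [CharTwo.sum_sq]
      exact Finset.sum_congr rfl fun i _ => by
        have := hpowpow z i 1; norm_num at this; exact this
    rw [h1]
    have h3 := Finset.sum_range_sub (fun i => z ^ (2 ^ i)) m
    simp only [CharTwo.sub_eq_add] at h3
    rw [Finset.sum_add_distrib] at h3
    simpa using h3
  have teleT0 : ∀ t : F, t ^ (2 ^ m) = t →
      ∑ i ∈ Finset.range m, (t ^ 2 + t) ^ (2 ^ i) = 0 := by
    intro t ht
    have h1 : ∀ i : ℕ, (t ^ 2 + t) ^ (2 ^ i) = t ^ (2 ^ (i + 1)) - t ^ (2 ^ i) := by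
      intro i
      rw [add_pow_char_pow, CharTwo.sub_eq_add]
      congr 1
      have := hpowpow t 1 i; norm_num at this
      rw [this, Nat.add_comm 1 i]
    calc ∑ i ∈ Finset.range m, (t ^ 2 + t) ^ (2 ^ i)
        = ∑ i ∈ Finset.range m, (t ^ (2 ^ (i + 1)) - t ^ (2 ^ i)) :=
          Finset.sum_congr rfl fun i _ => h1 i
      _ = t ^ (2 ^ m) - t ^ (2 ^ 0) := Finset.sum_range_sub (fun i => t ^ (2 ^ i)) m
      _ = 0 := by rw [ht]; simp
  have Tadd : ∀ z w : F, ∑ i ∈ Finset.range m, (z + w) ^ (2 ^ i)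
      = (∑ i ∈ Finset.range m, z ^ (2 ^ i)) + ∑ i ∈ Finset.range m, w ^ (2 ^ i) := by
    intro z w
    rw [← Finset.sum_add_distrib]
    exact Finset.sum_congr rfl fun i _ => add_pow_char_pow z w 2 i
  -- Q ∈ {0,1}
  have trQ : ∀ e : F, tr (∑ i ∈ Finset.range m, e ^ (2 ^ i)) = 0 ∨
      tr (∑ i ∈ Finset.range m, e ^ (2 ^ i)) = 1 := by
    intro e
    have hQ : tr (∑ i ∈ Finset.range m, e ^ (2 ^ i))
        = ∑ i ∈ Finset.range m, (tr e) ^ (2 ^ i) := by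
      rw [tr_sum]
      exact Finset.sum_congr rfl fun i _ => tr_pow e i
    have hsq := tele (tr e)
    rw [tr_in e] at hsq
    have hz : tr (∑ i ∈ Finset.range m, e ^ (2 ^ i)) *
        (tr (∑ i ∈ Finset.range m, e ^ (2 ^ i)) + 1) = 0 := by
      rw [hQ]
      linear_combination hsq + (tr e) * h2
    rcases mul_eq_zero.mp hz with h | h
    · exact Or.inl h
    · exact Or.inr (by linear_combination h - h2)
  -- quadratic roots
  have quad : ∀ u w : F, u ^ 2 + u = w ^ 2 + w → u = w ∨ u = w + 1 := by
    intro u w h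
    have hz : (u + w) * (u + w + 1) = 0 := by
      linear_combination h + (u * w + w ^ 2 + w) * h2
    rcases mul_eq_zero.mp hz with h' | h'
    · exact Or.inl (by linear_combination h' - w * h2)
    · exact Or.inr (by linear_combination h' - (w + 1) * h2)
  -- H facts
  have hH : ∀ x : F, ((tr x) ^ 2 + tr x + a) ^ (2 ^ m) = (tr x) ^ 2 + tr x + a := by
    intro x
    rw [add_pow_char_pow, add_pow_char_pow, ha]
    have h1 : ((tr x) ^ 2) ^ (2 ^ m) = (tr x) ^ 2 := by
      rw [← pow_right_comm, tr_in]
    rw [h1, tr_in]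
  have hHne : ∀ x : F, (tr x) ^ 2 + tr x + a ≠ 0 := by
    intro x h0
    apply htr
    have haa : a = ((tr x) ^ 2 + tr x + a) + ((tr x) ^ 2 + tr x) := by
      linear_combination -((tr x) ^ 2 + tr x) * h2
    rw [h0, zero_add] at haa
    calc ∑ i ∈ Finset.range m, a ^ (2 ^ i)
        = ∑ i ∈ Finset.range m, ((tr x) ^ 2 + tr x) ^ (2 ^ i) := by rw [← haa]
      _ = 0 := teleT0 (tr x) (tr_in x)
  -- properties of the pairing
  have hD : ∀ x : F, ((eAux g a tr x) ^ (2 ^ m) + eAux g a tr x) * ((tr x) ^ 2 + tr x + a)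
      = (g.eval (tr x)) ^ (2 ^ m) + (g.eval (tr x + 1)) ^ (2 ^ m)
        + (g.eval (tr x) + g.eval (tr x + 1)) := by
    intro x
    have h1 : eAux g a tr x * ((tr x) ^ 2 + tr x + a)
        = g.eval (tr x) + g.eval (tr x + 1) := by
      simp only [eAux]
      exact div_mul_cancel₀ _ (hHne x)
    have h1m : (eAux g a tr x) ^ (2 ^ m) * ((tr x) ^ 2 + tr x + a)
        = (g.eval (tr x)) ^ (2 ^ m) + (g.eval (tr x + 1)) ^ (2 ^ m) := by
      calc (eAux g a tr x) ^ (2 ^ m) * ((tr x) ^ 2 + tr x + a)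
          = (eAux g a tr x) ^ (2 ^ m) * ((tr x) ^ 2 + tr x + a) ^ (2 ^ m) := by rw [hH]
        _ = (eAux g a tr x * ((tr x) ^ 2 + tr x + a)) ^ (2 ^ m) := (mul_pow _ _ _).symm
        _ = (g.eval (tr x) + g.eval (tr x + 1)) ^ (2 ^ m) := by rw [h1]
        _ = (g.eval (tr x)) ^ (2 ^ m) + (g.eval (tr x + 1)) ^ (2 ^ m) :=
            add_pow_char_pow _ _ 2 m
    rw [add_mul, h1, h1m]
  have hWsq : ∀ x : F, (wAux m g a tr x) ^ 2 + wAux m g a tr x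
      = (eAux g a tr x) ^ (2 ^ m) + eAux g a tr x := by
    intro x
    simp only [wAux]
    exact tele (eAux g a tr x)
  have htrW : ∀ x : F, tr (wAux m g a tr x) = 0 ∨ tr (wAux m g a tr x) = 1 := by
    intro x
    simp only [wAux]
    exact trQ _
  have htrP : ∀ x : F, tr (piMap m g a tr x) = tr x + 1 := by
    intro x
    simp only [piMap]
    rw [tr_add, tr_add, tr_add, tr_one, tr_const (tr (wAux m g a tr x)) (tr_in _)]
    linear_combination (tr (wAux m g a tr x)) * h2
  have hPne : ∀ x : F, piMap m g a tr x ≠ x := by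
    intro x h
    have h' := htrP x
    rw [h] at h'
    exact one_ne_zero (α := F) (by linear_combination -h')
  have hε : ∀ x : F, (1 + tr (wAux m g a tr x)) ^ 2 + (1 + tr (wAux m g a tr x)) = 0 := by
    intro x
    rcases htrW x with h | h <;> rw [h]
    · linear_combination h2
    · linear_combination 3 * h2
  have hPsq : ∀ x : F, (piMap m g a tr x) ^ 2 + piMap m g a tr x
      = x ^ 2 + x + ((eAux g a tr x) ^ (2 ^ m) + eAux g a tr x) := by
    intro x
    simp only [piMap]
    linear_combination hWsq x + hε x +
      (x * wAux m g a tr x + x * (1 + tr (wAux m g a tr x))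
        + wAux m g a tr x * (1 + tr (wAux m g a tr x))) * h2
  have hfP : ∀ x : F, f (piMap m g a tr x) = f x := by
    intro x
    rw [hf (piMap m g a tr x), hf x, htrP x]
    linear_combination ((tr x) ^ 2 + tr x + a + 2 * (tr x + 1)) * hPsq x + hD x +
      ((g.eval (tr x + 1)) ^ (2 ^ m) + g.eval (tr x + 1)
        + (tr x + 1) * (x ^ 2 + x + ((eAux g a tr x) ^ (2 ^ m) + eAux g a tr x))) * h2
  -- trace of f
  have htrf : ∀ x : F, tr (f x) = ((tr x) ^ 2 + tr x) * ((tr x) ^ 2 + tr x + a) := by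
    intro x
    rw [hf x, tr_add, tr_add]
    have hA : tr ((x ^ 2 + x) * ((tr x) ^ 2 + tr x + a))
        = ((tr x) ^ 2 + tr x) * ((tr x) ^ 2 + tr x + a) := by
      rw [mul_comm (x ^ 2 + x) ((tr x) ^ 2 + tr x + a), tr_smul _ _ (hH x), tr_add, tr_sq,
        mul_comm]
    rw [hA, tr_shift]
    linear_combination (tr (g.eval (tr x))) * h2
  -- injectivity structure
  have hinj : ∀ x y : F, f x = f y → y = x ∨ y = piMap m g a tr x := by
    intro x y hxy
    have h1 : ((tr x) ^ 2 + tr x) * ((tr x) ^ 2 + tr x + a)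
        = ((tr y) ^ 2 + tr y) * ((tr y) ^ 2 + tr y + a) := by
      rw [← htrf x, ← htrf y, hxy]
    have hfac : (((tr x) ^ 2 + tr x) + ((tr y) ^ 2 + tr y)) *
        ((((tr x) ^ 2 + tr x) + ((tr y) ^ 2 + tr y)) + a) = 0 := by
      linear_combination h1 + (((tr x) ^ 2 + tr x) * ((tr y) ^ 2 + tr y)
        + ((tr y) ^ 2 + tr y) ^ 2 + a * ((tr y) ^ 2 + tr y)) * h2
    rcases mul_eq_zero.mp hfac with hc | hc
    · -- t² + t = s² + s
      have key : (tr y) ^ 2 + tr y = (tr x) ^ 2 + tr x := by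
        linear_combination hc - ((tr x) ^ 2 + tr x) * h2
      rcases quad (tr y) (tr x) key with h' | h'
      · -- same trace: y = x
        left
        have hy : f y = (y ^ 2 + y) * ((tr x) ^ 2 + tr x + a)
            + (g.eval (tr x)) ^ (2 ^ m) + g.eval (tr x) := by rw [hf y, h']
        have h9 : (x ^ 2 + x) * ((tr x) ^ 2 + tr x + a)
            + (g.eval (tr x)) ^ (2 ^ m) + g.eval (tr x)
            = (y ^ 2 + y) * ((tr x) ^ 2 + tr x + a)
            + (g.eval (tr x)) ^ (2 ^ m) + g.eval (tr x) := by
          rw [← hf x, ← hy]; exact hxy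
        have h10 := add_right_cancel (add_right_cancel h9)
        have h11 : x ^ 2 + x = y ^ 2 + y := mul_right_cancel₀ (hHne x) h10
        rcases quad y x h11.symm with h'' | h''
        · exact h''
        · exfalso
          have hcon : tr x = tr x + 1 := by
            conv_lhs => rw [← h', h'', tr_add, tr_one]
          exact one_ne_zero (α := F) (by linear_combination -hcon)
      · -- tr y = tr x + 1: y = π x
        right
        have hy : f y = (y ^ 2 + y) * ((tr x) ^ 2 + tr x + a)
            + (g.eval (tr x + 1)) ^ (2 ^ m) + g.eval (tr x + 1) := by
          rw [hf y, h']
          linear_combination (y ^ 2 + y) * (tr x + 1) * h2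
        have h9 : (x ^ 2 + x) * ((tr x) ^ 2 + tr x + a)
            + (g.eval (tr x)) ^ (2 ^ m) + g.eval (tr x)
            = (y ^ 2 + y) * ((tr x) ^ 2 + tr x + a)
            + (g.eval (tr x + 1)) ^ (2 ^ m) + g.eval (tr x + 1) := by
          rw [← hf x, ← hy]; exact hxy
        have h11 : (y ^ 2 + y) * ((tr x) ^ 2 + tr x + a)
            = (x ^ 2 + x + ((eAux g a tr x) ^ (2 ^ m) + eAux g a tr x))
              * ((tr x) ^ 2 + tr x + a) := by
          linear_combination -h9 - hD x
            - ((g.eval (tr x + 1)) ^ (2 ^ m) + g.eval (tr x + 1)) * h2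
        have h12 : y ^ 2 + y = x ^ 2 + x + ((eAux g a tr x) ^ (2 ^ m) + eAux g a tr x) :=
          mul_right_cancel₀ (hHne x) h11
        have h13 : y ^ 2 + y = (piMap m g a tr x) ^ 2 + piMap m g a tr x := by
          linear_combination h12 - hPsq x
        rcases quad y (piMap m g a tr x) h13 with h'' | h''
        · exact h''
        · exfalso
          have hcon : tr x + 1 = tr x + 1 + 1 := by
            conv_lhs => rw [← h', h'', tr_add, htrP x, tr_one]
          exact one_ne_zero (α := F) (by linear_combination -hcon)
    · -- second factor zero: contradiction with trace of a
      exfalso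
      apply htr
      have ha' : a = ((tr x) ^ 2 + tr x) + ((tr y) ^ 2 + tr y) := by
        linear_combination hc - (((tr x) ^ 2 + tr x) + ((tr y) ^ 2 + tr y)) * h2
      calc ∑ i ∈ Finset.range m, a ^ (2 ^ i)
          = ∑ i ∈ Finset.range m, (((tr x) ^ 2 + tr x) + ((tr y) ^ 2 + tr y)) ^ (2 ^ i) := by
            rw [← ha']
        _ = 0 := by
            rw [Tadd, teleT0 (tr x) (tr_in x), teleT0 (tr y) (tr_in y), add_zero]
  -- conclusion
  intro b
  by_cases hb : ∃ x : F, f x = b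
  · left
    obtain ⟨x, hx⟩ := hb
    have hset : Finset.univ.filter (fun z : F => f z = b) = {x, piMap m g a tr x} := by
      ext z
      simp only [Finset.mem_filter, Finset.mem_univ, true_and, Finset.mem_insert,
        Finset.mem_singleton]
      constructor
      · intro hz
        exact hinj x z (by rw [hx, hz])
      · rintro (rfl | rfl)
        · exact hx
        · rw [hfP x]; exact hx
    rw [hset, Finset.card_insert_of_notMem (by
      simp only [Finset.mem_singleton]
      exact fun h => hPne x h.symm), Finset.card_singleton]
  · right
    rw [Finset.card_eq_zero]
    exact Finset.filter_eq_empty_iff.mpr (fun {z} _ hz => hb ⟨z, hz⟩)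
end

section
/- Let q = 2^k, n odd, and g(x) = x³ + bx + a ∈ F_q[x] with Tr_k((b+1)³/a² + 1) ≠ 0 (in particular a ≠ 0). Then f(x) = x² + x·g(Tr^{kn}_k(x)) is a 2-to-1 mapping on F_{q^n}. -/
open Finset Polynomial


lemma myChar2 {E : Type*} [Field E] [Fintype E] {m : ℕ}
    (hE : Fintype.card E = 2 ^ m) : CharP E 2 := by
  obtain ⟨p, hcp⟩ := CharP.exists E
  have hp : p.Prime := CharP.char_is_prime E p
  haveI : Fact p.Prime := ⟨hp⟩
  obtain ⟨n, hn⟩ := FiniteField.card E p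
  have h2 : p = 2 := by
    have hd : p ∣ 2 ^ m := by
      rw [← hE, hn.2]; exact dvd_pow_self p n.2.ne'
    exact (Nat.prime_dvd_prime_iff_eq hp Nat.prime_two).mp (hp.dvd_of_dvd_pow hd)
  rwa [h2] at hcp

lemma myTele {E : Type*} [Field E] (h2 : CharP E 2) (m : ℕ) (u : E) :
    ∑ i ∈ Finset.range m, (u ^ 2 + u) ^ 2 ^ i = u ^ 2 ^ m + u := by
  haveI := h2
  have hstep : ∀ i, (u ^ 2 + u) ^ 2 ^ i = u ^ 2 ^ (i + 1) - u ^ 2 ^ i := by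
    intro i
    rw [add_pow_char_pow (R := E) (p := 2), CharTwo.sub_eq_add]
    congr 1
    rw [← pow_mul, ← pow_succ']
  calc ∑ i ∈ Finset.range m, (u ^ 2 + u) ^ 2 ^ i
      = ∑ i ∈ Finset.range m, (u ^ 2 ^ (i + 1) - u ^ 2 ^ i) :=
        Finset.sum_congr rfl fun i _ => hstep i
    _ = u ^ 2 ^ m - u ^ 2 ^ 0 := Finset.sum_range_sub (fun i => u ^ 2 ^ i) m
    _ = u ^ 2 ^ m + u := by rw [CharTwo.sub_eq_add, pow_zero, pow_one]

lemma myPsurj {E : Type*} [Field E] [Fintype E] [DecidableEq E] {m : ℕ} (hm : 0 < m)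
    (hE : Fintype.card E = 2 ^ m) (x : E)
    (hx : ∑ i ∈ Finset.range m, x ^ 2 ^ i = 0) : ∃ u : E, u ^ 2 + u = x := by
  haveI h2 : CharP E 2 := myChar2 hE
  have htwo : (2 : E) = 0 := CharTwo.two_eq_zero
  set P : Finset E := Finset.univ.image (fun u : E => u ^ 2 + u) with hP
  set Z : Finset E := Finset.univ.filter
      (fun y : E => ∑ i ∈ Finset.range m, y ^ 2 ^ i = 0) with hZ
  -- each fiber of ℘ over P has exactly two elements
  have hfib : ∀ y ∈ P, (Finset.univ.filter (fun u : E => u ^ 2 + u = y)).card = 2 := by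
    intro y hy
    obtain ⟨u₀, _, rfl⟩ := Finset.mem_image.mp hy
    have hset : Finset.univ.filter (fun u : E => u ^ 2 + u = u₀ ^ 2 + u₀)
        = {u₀, u₀ + 1} := by
      ext u
      simp only [Finset.mem_filter, Finset.mem_univ, true_and, Finset.mem_insert,
        Finset.mem_singleton]
      constructor
      · intro h
        have hfac : (u - u₀) * (u - (u₀ + 1)) = 0 := by
          linear_combination h + (-u * u₀ - u + u₀ ^ 2 + u₀) * htwo
        rcases mul_eq_zero.mp hfac with h' | h'
        · left; exact sub_eq_zero.mp h'
        · right; exact sub_eq_zero.mp h'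
      · rintro (rfl | rfl)
        · rfl
        · linear_combination (u₀ + 1) * htwo
    rw [hset]
    rw [Finset.card_insert_of_notMem, Finset.card_singleton]
    simp only [Finset.mem_singleton]
    intro h
    exact one_ne_zero ((left_eq_add).mp h)
  have hcardP : P.card * 2 = 2 ^ m := by
    have := Finset.card_eq_sum_card_fiberwise
      (f := fun u : E => u ^ 2 + u) (s := Finset.univ) (t := P)
      (fun u _ => Finset.mem_image_of_mem _ (Finset.mem_univ u))
    rw [Finset.card_univ, hE] at this
    rw [this, Finset.sum_congr rfl hfib, Finset.sum_const, smul_eq_mul, mul_comm]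
  -- P ⊆ Z
  have hPZ : P ⊆ Z := by
    intro y hy
    obtain ⟨u₀, _, rfl⟩ := Finset.mem_image.mp hy
    simp only [hZ, Finset.mem_filter, Finset.mem_univ, true_and]
    rw [myTele h2 m u₀]
    have : u₀ ^ 2 ^ m = u₀ := by rw [← hE]; exact FiniteField.pow_card u₀
    rw [this]
    linear_combination u₀ * htwo
  -- card Z ≤ 2^(m-1)
  have hZcard : Z.card ≤ 2 ^ (m - 1) := by
    set p : Polynomial E := ∑ i ∈ Finset.range m, Polynomial.X ^ 2 ^ i with hp
    have hcoeff : p.coeff (2 ^ (m - 1)) = 1 := by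
      rw [hp, Polynomial.finset_sum_coeff]
      rw [Finset.sum_eq_single (m - 1)]
      · rw [Polynomial.coeff_X_pow, if_pos rfl]
      · intro i _ hne
        rw [Polynomial.coeff_X_pow, if_neg]
        intro h
        exact hne (Nat.pow_right_injective (le_refl 2) h.symm)
      · intro h
        exact absurd (Finset.mem_range.mpr (Nat.sub_lt hm one_pos)) h
    have hpne : p ≠ 0 := fun h => by simp [h] at hcoeff
    have hdeg : p.natDegree ≤ 2 ^ (m - 1) := by
      apply Polynomial.natDegree_sum_le_of_forall_le
      intro i hi
      rw [Polynomial.natDegree_X_pow]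
      exact Nat.pow_le_pow_right (by norm_num) (Nat.le_sub_one_of_lt (Finset.mem_range.mp hi))
    have hsub : Z ⊆ p.roots.toFinset := by
      intro y hy
      simp only [hZ, Finset.mem_filter, Finset.mem_univ, true_and] at hy
      rw [Multiset.mem_toFinset, Polynomial.mem_roots hpne]
      simp only [Polynomial.IsRoot, hp, Polynomial.eval_finset_sum, Polynomial.eval_pow,
        Polynomial.eval_X]
      exact hy
    calc Z.card ≤ p.roots.toFinset.card := Finset.card_le_card hsub
      _ ≤ Multiset.card p.roots := Multiset.toFinset_card_le _
      _ ≤ p.natDegree := Polynomial.card_roots' p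
      _ ≤ 2 ^ (m - 1) := hdeg
  -- conclude P = Z
  have hcardP' : P.card = 2 ^ (m - 1) := by
    have h2m : 2 ^ m = 2 ^ (m - 1) * 2 := by
      rw [← pow_succ, Nat.sub_add_cancel hm]
    omega
  have hPeqZ : P = Z := Finset.eq_of_subset_of_card_le hPZ (by omega)
  have hxZ : x ∈ Z := by
    simp only [hZ, Finset.mem_filter, Finset.mem_univ, true_and]; exact hx
  rw [← hPeqZ] at hxZ
  obtain ⟨u, _, hu⟩ := Finset.mem_image.mp hxZ
  exact ⟨u, hu⟩

-- image of a finite field of card 2^m under a ring hom = roots of X^(2^m)-X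
lemma myImg {E K : Type*} [Field E] [Fintype E] [DecidableEq E] [Field K]
    (g : E →+* K) {m : ℕ} (hE : Fintype.card E = 2 ^ m)
    (y : K) (hy : y ^ 2 ^ m = y) : ∃ e : E, g e = y := by
  classical
  have h1m : 1 < 2 ^ m := by
    rw [← hE]; exact Fintype.one_lt_card
  set p : Polynomial K := Polynomial.X ^ 2 ^ m - Polynomial.X with hp
  have hdeg : p.natDegree = 2 ^ m := by
    rw [hp]
    compute_degree
    · rw [if_neg (by omega)]; norm_num
    · omega
  have hpne : p ≠ 0 := by
    intro h
    rw [h, Polynomial.natDegree_zero] at hdeg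
    omega
  have hroot : ∀ z : K, z ^ 2 ^ m = z → z ∈ p.roots.toFinset := by
    intro z hz
    rw [Multiset.mem_toFinset, Polynomial.mem_roots hpne]
    simp [hp, Polynomial.IsRoot, hz]
  set S : Finset K := Finset.univ.image g with hS
  have hSsub : S ⊆ p.roots.toFinset := by
    intro z hz
    obtain ⟨e, _, rfl⟩ := Finset.mem_image.mp hz
    apply hroot
    rw [← map_pow, ← hE, FiniteField.pow_card]
  have hScard : S.card = 2 ^ m := by
    rw [hS, Finset.card_image_of_injective _ g.injective, Finset.card_univ, hE]
  have hrcard : p.roots.toFinset.card ≤ 2 ^ m := by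
    calc p.roots.toFinset.card ≤ Multiset.card p.roots := Multiset.toFinset_card_le _
      _ ≤ p.natDegree := Polynomial.card_roots' p
      _ = 2 ^ m := hdeg
  have hSeq : S = p.roots.toFinset :=
    Finset.eq_of_subset_of_card_le hSsub (by omega)
  have : y ∈ S := by rw [hSeq]; exact hroot y hy
  obtain ⟨e, _, he⟩ := Finset.mem_image.mp this
  exact ⟨e, he⟩

-- cube roots in a cyclic group
lemma myCube {G : Type*} [Group G] [Fintype G] [IsCyclic G] {N : ℕ}
    (hN : Fintype.card G = N) (h3 : 3 ∣ N) (x : G) (hx : x ^ (N / 3) = 1) :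
    ∃ y : G, y ^ 3 = x := by
  obtain ⟨g, hg⟩ := IsCyclic.exists_generator (α := G)
  have hord : orderOf g = N := by
    rw [orderOf_eq_card_of_forall_mem_zpowers hg, Nat.card_eq_fintype_card, hN]
  obtain ⟨z, rfl⟩ := hg x
  have h1 : ((orderOf g : ℤ)) ∣ z * (N / 3 : ℕ) := by
    rw [orderOf_dvd_iff_zpow_eq_one, zpow_mul]
    rw [zpow_natCast]
    exact hx
  obtain ⟨M, hM⟩ := h3
  have hM0 : M ≠ 0 := by
    rintro rfl
    rw [mul_zero] at hM
    rw [hM] at hN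
    exact absurd hN (by simp [Fintype.card_ne_zero])
  have hNd3 : (N / 3 : ℕ) = M := by omega
  rw [hord, hNd3, hM] at h1
  -- (3M : ℤ) ∣ z * M  ⟹ 3 ∣ z
  have h3z : (3 : ℤ) ∣ z := by
    rcases h1 with ⟨t, ht⟩
    refine ⟨t, ?_⟩
    have hMz : (M : ℤ) ≠ 0 := Int.natCast_ne_zero.mpr hM0
    have : z * M = 3 * t * M := by push_cast at ht ⊢; linarith
    exact mul_right_cancel₀ hMz this
  obtain ⟨t, rfl⟩ := h3z
  refine ⟨g ^ t, ?_⟩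
  show (g ^ t) ^ (3:ℕ) = g ^ (3 * t)
  rw [← zpow_natCast (g ^ t) 3, ← zpow_mul, mul_comm]
  norm_num

lemma my43 (j : ℕ) : 4 ^ j % 3 = 1 := by
  rw [Nat.pow_mod]; norm_num

lemma myRoot {E : Type*} [Field E] [Fintype E] [DecidableEq E] (k : ℕ) (hk : 0 < k)
    (hcard : Fintype.card E = 2 ^ (2 * k)) (a b : E)
    (ha : a ^ 2 ^ k = a) (hb : b ^ 2 ^ k = b) (ha0 : a ≠ 0)
    (hT : ∑ i ∈ Finset.range k, ((b + 1) ^ 3 / a ^ 2 + 1) ^ 2 ^ i = 1) :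
    ∃ d : E, d ^ 2 ^ k = d ∧ d ^ 3 + (b + 1) * d + a = 0 := by
  haveI h2 : CharP E 2 := myChar2 hcard
  have htwo : (2 : E) = 0 := CharTwo.two_eq_zero
  obtain ⟨c, hcdef⟩ : ∃ c : E, c = b + 1 := ⟨_, rfl⟩
  rw [← hcdef] at hT ⊢
  have hc : c ^ 2 ^ k = c := by
    rw [hcdef, add_pow_char_pow (R := E) (p := 2), one_pow, hb]
  -- cube roots of σ-fixed elements when 3 ∣ 2^(k+1)-1
  have hfix_cube : ∀ x : E, x ≠ 0 → x ^ 2 ^ k = x → (3 : ℕ) ∣ 2 ^ (k + 1) - 1 →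
      ∃ w : E, w ≠ 0 ∧ w ^ 3 = x ∧ w ^ 2 ^ k = w := by
    intro x hx0 hxk h3
    obtain ⟨e, he⟩ := h3
    have h1le : 1 ≤ 2 ^ (k + 1) := Nat.one_le_two_pow
    have h3e : 3 * e + 1 = 2 ^ (k + 1) := by omega
    refine ⟨x ^ e, pow_ne_zero e hx0, ?_, ?_⟩
    · have hxx : x ^ (3 * e) * x = x * x := by
        rw [← pow_succ, h3e, pow_succ, pow_mul, hxk, sq]
      have hres := mul_right_cancel₀ hx0 hxx
      rw [← pow_mul, mul_comm e 3]
      exact hres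
    · rw [← pow_mul, mul_comm, pow_mul, hxk]
  have hdodd : ∀ j : ℕ, k + 1 = 2 * j → (3:ℕ) ∣ 2 ^ (k + 1) - 1 := by
    intro j hj
    have h4 : (2:ℕ) ^ (k+1) = 4 ^ j := by
      rw [hj, pow_mul]; norm_num
    have := my43 j
    omega
  rcases eq_or_ne c 0 with hc0 | hc0
  · -- c = 0 : then k must be odd; take cube root of a
    have hX : (c ^ 3 / a ^ 2 + 1 : E) = 1 := by rw [hc0]; simp
    rw [hX] at hT
    simp only [one_pow, Finset.sum_const, Finset.card_range, nsmul_eq_mul, mul_one] at hT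
    have hkodd : ¬ (2 ∣ k) := by
      rintro ⟨j, hj⟩
      rw [hj] at hT
      push_cast at hT
      rw [show ((2:E) * j) = 2 * (j:E) from rfl, htwo, zero_mul] at hT
      exact one_ne_zero hT.symm
    have h3d : (3:ℕ) ∣ 2 ^ (k + 1) - 1 := hdodd ((k+1)/2) (by omega)
    obtain ⟨w, hw0, hw3, hwk⟩ := hfix_cube a ha0 ha h3d
    exact ⟨w, hwk, by rw [hc0, hw3]; linear_combination a * htwo⟩
  · -- c ≠ 0
    set Y : E := c ^ 3 / a ^ 2 with hYdef
    have hYfix : Y ^ 2 ^ k = Y := by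
      rw [hYdef, div_pow, ← pow_mul, ← pow_mul, mul_comm 3, mul_comm 2,
        pow_mul, pow_mul, ha, hc]
    have hYne : Y ≠ 0 := div_ne_zero (pow_ne_zero 3 hc0) (pow_ne_zero 2 ha0)
    have hY2 : a ^ 2 * Y = c ^ 3 := by rw [hYdef]; field_simp
    have hAY : ∑ i ∈ Finset.range (2 * k), Y ^ 2 ^ i = 0 := by
      rw [two_mul, Finset.sum_range_add]
      have hsh : ∀ i, Y ^ 2 ^ (k + i) = Y ^ 2 ^ i := fun i => by
        rw [pow_add, pow_mul, hYfix]
      rw [Finset.sum_congr rfl (fun i _ => hsh i)]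
      linear_combination (∑ i ∈ Finset.range k, Y ^ 2 ^ i) * htwo
    obtain ⟨V, hV⟩ := myPsurj (by omega) hcard Y hAY
    have hS : V ^ 2 ^ k + V = 1 + (k : E) := by
      have h1 : ∑ i ∈ Finset.range k, Y ^ 2 ^ i = V ^ 2 ^ k + V := by
        rw [← hV]; exact myTele h2 k V
      have h2' : ∑ i ∈ Finset.range k, (Y + 1) ^ 2 ^ i
          = (∑ i ∈ Finset.range k, Y ^ 2 ^ i) + (k : E) := by
        have hstep : ∀ i, (Y + 1 : E) ^ 2 ^ i = Y ^ 2 ^ i + 1 := fun i => by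
          rw [add_pow_char_pow (R := E) (p := 2), one_pow]
        rw [Finset.sum_congr rfl (fun i _ => hstep i), Finset.sum_add_distrib]
        simp
      rw [h2', h1] at hT
      linear_combination hT - (k : E) * htwo
    have hVne : V ≠ 0 := by
      intro h
      rw [h] at hV
      simp at hV
      exact hYne hV.symm
    obtain ⟨W, hWdef⟩ : ∃ W : E, W = a * V := ⟨_, rfl⟩
    have hWne : W ≠ 0 := hWdef ▸ mul_ne_zero ha0 hVne
    have hW : W ^ 2 + a * W = c ^ 3 := by
      rw [hWdef, ← hY2, ← hV]; ring
    have hWeq : W ^ 2 + a * W + c ^ 3 = 0 := by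
      linear_combination hW + c ^ 3 * htwo
    have hWk : W ^ 2 ^ k = W + a * (1 + (k : E)) := by
      rw [hWdef, mul_pow, ha]
      linear_combination a * hS - a * V * htwo
    obtain ⟨w, hwne, hw3, hwq⟩ :
        ∃ w : E, w ≠ 0 ∧ w ^ 3 = W ∧ (w + c / w) ^ 2 ^ k = w + c / w := by
      rcases Nat.even_or_odd k with hke | hko
      · -- k even
        obtain ⟨j, hj⟩ := hke
        have hkE : (k : E) = 0 := by
          rw [hj]; push_cast; rw [← two_mul, htwo, zero_mul]
        rw [hkE, add_zero, mul_one] at hWk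
        have hprod : W ^ 2 ^ k * W = c ^ 3 := by
          rw [hWk]; linear_combination hW
        have h3k : (3:ℕ) ∣ 2 ^ k - 1 := by
          have h4 : (2:ℕ) ^ k = 4 ^ j := by
            rw [hj, ← two_mul, pow_mul]; norm_num
          have := my43 j
          omega
        obtain ⟨u, hu⟩ := h3k
        have h2k1 : 1 ≤ (2:ℕ) ^ k := Nat.one_le_two_pow
        have huk : 2 ^ k = 3 * u + 1 := by omega
        set N : ℕ := 2 ^ (2 * k) - 1 with hNdef
        set B : ℕ := (2 ^ k + 1) * u with hBdef
        have hexp : 2 ^ k * 2 ^ k = 3 * B + 1 := by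
          rw [hBdef, huk]; ring
        have hsq : (2:ℕ) ^ (2 * k) = 2 ^ k * 2 ^ k := by
          rw [two_mul, pow_add]
        have hNval : N = 3 * B := by omega
        have hNdvd : (3:ℕ) ∣ N := ⟨B, hNval⟩
        have hNd3 : N / 3 = B := by omega
        have hNcard : Fintype.card Eˣ = N := by
          rw [Fintype.card_units, hcard]
        have hcpow : c ^ (2 ^ k - 1) = 1 := by
          have hstep : c ^ (2 ^ k - 1) * c = 1 * c := by
            rw [← pow_succ, Nat.sub_add_cancel h2k1, hc, one_mul]
          exact mul_right_cancel₀ hc0 hstep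
        have hWN3 : W ^ (N / 3) = 1 := by
          rw [hNd3, hBdef, pow_mul, pow_succ, hprod, ← pow_mul,
            show 3 * u = 2 ^ k - 1 from hu.symm]
          exact hcpow
        have hWuN3 : (Units.mk0 W hWne) ^ (N / 3) = 1 := by
          ext
          push_cast
          exact hWN3
        obtain ⟨wu, hwu⟩ := myCube hNcard hNdvd (Units.mk0 W hWne) hWuN3
        obtain ⟨w₀, hw0ne, hw03⟩ : ∃ w₀ : E, w₀ ≠ 0 ∧ w₀ ^ 3 = W := by
          refine ⟨(wu : E), wu.ne_zero, ?_⟩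
          have := congrArg Units.val hwu
          push_cast at this
          exact this
        obtain ⟨z, hzdef⟩ : ∃ z : E, z = w₀ ^ (2 ^ k + 1) / c := ⟨_, rfl⟩
        have hz3 : z ^ 3 = 1 := by
          have h1 : (w₀ ^ (2 ^ k + 1)) ^ 3 = c ^ 3 := by
            rw [← pow_mul, mul_comm, pow_mul, hw03, pow_succ, hprod]
          rw [hzdef, div_pow, h1, div_self (pow_ne_zero 3 hc0)]
        have hzne : z ≠ 0 := by
          rw [hzdef]
          exact div_ne_zero (pow_ne_zero _ hw0ne) hc0
        have hzq : z ^ 2 ^ k = z := by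
          rw [huk, pow_succ, pow_mul, hz3, one_pow, one_mul]
        obtain ⟨w, hwdef⟩ : ∃ w : E, w = z * w₀ := ⟨_, rfl⟩
        have hwne : w ≠ 0 := hwdef ▸ mul_ne_zero hzne hw0ne
        have hw3 : w ^ 3 = W := by rw [hwdef, mul_pow, hz3, one_mul, hw03]
        have hw0q : w₀ ^ (2 ^ k + 1) = z * c := by
          rw [hzdef]; field_simp
        have hwq' : w ^ (2 ^ k + 1) = c := by
          rw [hwdef, mul_pow, hw0q, pow_succ, hzq]
          linear_combination c * hz3
        have hwfix : w ^ 2 ^ k = c / w := by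
          rw [eq_div_iff hwne, ← pow_succ]
          exact hwq'
        refine ⟨w, hwne, hw3, ?_⟩
        rw [add_pow_char_pow (R := E) (p := 2), div_pow, hc, hwfix]
        have hccw : c / (c / w) = w := by field_simp
        rw [hccw]
        ring
      · -- k odd
        have hkE : (k : E) = 1 := by
          obtain ⟨j, hj⟩ := hko
          rw [hj]; push_cast; linear_combination (j : E) * htwo
        have hWfix : W ^ 2 ^ k = W := by
          rw [hWk, hkE]
          linear_combination a * htwo
        have h3d : (3:ℕ) ∣ 2 ^ (k + 1) - 1 := by
          obtain ⟨j, hj⟩ := hko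
          exact hdodd (j + 1) (by omega)
        obtain ⟨w, hw0, hw3, hwk⟩ := hfix_cube W hWne hWfix h3d
        refine ⟨w, hw0, hw3, ?_⟩
        rw [add_pow_char_pow (R := E) (p := 2), div_pow, hc, hwk]
    refine ⟨w + c / w, hwq, ?_⟩
    have hkey : (w ^ 3) ^ 2 + a * w ^ 3 + c ^ 3 = 0 := by rw [hw3]; exact hWeq
    have hw3ne : w ^ 3 ≠ 0 := pow_ne_zero 3 hwne
    have hmul : w ^ 3 * ((w + c / w) ^ 3 + c * (w + c / w) + a) = 0 := by
      have hexp : w ^ 3 * ((w + c / w) ^ 3 + c * (w + c / w) + a)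
          = (w ^ 3) ^ 2 + a * w ^ 3 + c ^ 3 + 2 * (2 * c ^ 2 * w ^ 2 + 2 * c * w ^ 4) := by
        field_simp
        ring
      rw [hexp, hkey]
      linear_combination (2 * c ^ 2 * w ^ 2 + 2 * c * w ^ 4) * htwo
    rcases mul_eq_zero.mp hmul with h | h
    · exact absurd h hw3ne
    · exact h

lemma myFixPow {R : Type*} [Monoid R] {x : R} {k : ℕ} (h : x ^ 2 ^ k = x) (m : ℕ) :
    x ^ 2 ^ (k * m) = x := by
  induction m with
  | zero => simp
  | succ m ih =>
    rw [Nat.mul_succ, pow_add, pow_mul, ih, h]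

lemma myExistsRootF {F : Type*} [Field F] [Fintype F] [DecidableEq F] (k n : ℕ)
    (hk : 0 < k) (hn : 0 < n) (hcard : Fintype.card F = 2 ^ (k * n))
    (a b : F) (ha : a ^ 2 ^ k = a) (hb : b ^ 2 ^ k = b) (ha0 : a ≠ 0)
    (hT : ∑ i ∈ Finset.range k, ((b + 1) ^ 3 / a ^ 2 + 1) ^ 2 ^ i = 1) :
    ∃ d : F, d ^ 2 ^ k = d ∧ d ^ 3 + (b + 1) * d + a = 0 := by
  haveI h2F : CharP F 2 := myChar2 hcard
  classical
  set K := AlgebraicClosure F with hK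
  letI : Algebra (ZMod 2) K := ZMod.algebra _ _
  set G := GaloisField 2 (2 * k) with hG
  haveI : Fintype G := Fintype.ofFinite G
  have hGcard : Fintype.card G = 2 ^ (2 * k) := by
    rw [← Nat.card_eq_fintype_card]
    exact GaloisField.card 2 (2 * k) (by omega)
  set f : G →ₐ[ZMod 2] K := IsAlgClosed.lift with hf
  set fr : G →+* K := f.toRingHom with hfr
  have hfinj : Function.Injective fr := fr.injective
  set ι : F →+* K := algebraMap F K with hι
  have hιinj : Function.Injective ι := ι.injective
  -- pull back a and b into G
  have haK : (ι a) ^ 2 ^ (2 * k) = ι a := by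
    rw [← map_pow, show (2*k) = k*2 by ring, myFixPow ha 2]
  have hbK : (ι b) ^ 2 ^ (2 * k) = ι b := by
    rw [← map_pow, show (2*k) = k*2 by ring, myFixPow hb 2]
  obtain ⟨a', ha'⟩ := myImg fr hGcard (ι a) haK
  obtain ⟨b', hb'⟩ := myImg fr hGcard (ι b) hbK
  have ha'fix : a' ^ 2 ^ k = a' := by
    apply hfinj
    rw [map_pow, ha', ← map_pow, ha]
  have hb'fix : b' ^ 2 ^ k = b' := by
    apply hfinj
    rw [map_pow, hb', ← map_pow, hb]
  have ha'0 : a' ≠ 0 := by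
    intro h
    rw [h, map_zero] at ha'
    exact ha0 (hιinj (by rw [← ha', map_zero]))
  have hT' : ∑ i ∈ Finset.range k, ((b' + 1) ^ 3 / a' ^ 2 + 1) ^ 2 ^ i = 1 := by
    apply hfinj
    rw [map_one, map_sum]
    have hX : fr ((b' + 1) ^ 3 / a' ^ 2 + 1) = ι ((b + 1) ^ 3 / a ^ 2 + 1) := by
      rw [map_add, map_div₀, map_pow, map_pow, map_add, map_one, ha', hb',
        map_add, map_div₀, map_pow, map_pow, map_add, map_one]
    calc ∑ i ∈ Finset.range k, fr (((b' + 1) ^ 3 / a' ^ 2 + 1) ^ 2 ^ i)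
        = ∑ i ∈ Finset.range k, (ι ((b + 1) ^ 3 / a ^ 2 + 1)) ^ 2 ^ i := by
          refine Finset.sum_congr rfl fun i _ => ?_
          rw [map_pow, hX]
      _ = ι (∑ i ∈ Finset.range k, ((b + 1) ^ 3 / a ^ 2 + 1) ^ 2 ^ i) := by
          rw [map_sum]
          exact Finset.sum_congr rfl fun i _ => (map_pow ι _ _).symm
      _ = 1 := by rw [hT, map_one]
  obtain ⟨d', hd'fix, hd'root⟩ := myRoot k hk hGcard a' b' ha'fix hb'fix ha'0 hT'
  -- push the root into K and pull back to F
  have hδfix : (fr d') ^ 2 ^ k = fr d' := by rw [← map_pow, hd'fix]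
  have hδF : (fr d') ^ 2 ^ (k * n) = fr d' := myFixPow hδfix n
  obtain ⟨d, hd⟩ := myImg ι hcard (fr d') hδF
  refine ⟨d, ?_, ?_⟩
  · apply hιinj
    rw [map_pow, hd]
    exact hδfix
  · apply hιinj
    rw [map_zero]
    have : fr (d' ^ 3 + (b' + 1) * d' + a') = 0 := by rw [hd'root, map_zero]
    rw [map_add, map_add, map_mul, map_pow, map_add, map_one, ha', hb'] at this
    rw [map_add, map_add, map_mul, map_pow, map_add, map_one, hd]
    exact this

/-- `f(x) = x² + x·g(Tr^{kn}_k(x))` with `g(x) = x³ + bx + a` is 2-to-1 on `F_{q^n}`,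
`q = 2^k`, `n` odd, provided `Tr_k((b+1)³/a² + 1) ≠ 0`. -/
theorem stmt6 {F : Type*} [Field F] [Fintype F] [DecidableEq F] (k n : ℕ)
    (hk : 0 < k) (hn : Odd n)
    (hcard : Fintype.card F = 2 ^ (k * n))
    (a b : F) (ha : a ^ (2 ^ k) = a) (hb : b ^ (2 ^ k) = b) (ha0 : a ≠ 0)
    (htr : ∑ i ∈ Finset.range k, ((b + 1) ^ 3 / a ^ 2 + 1) ^ (2 ^ i) ≠ 0)
    (tr : F → F) (htrdef : ∀ x, tr x = ∑ i ∈ Finset.range n, x ^ (2 ^ (k * i)))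
    (f : F → F) (hf : ∀ x, f x = x ^ 2 + x * ((tr x) ^ 3 + b * tr x + a)) :
    ∀ v : F, (Finset.univ.filter (fun x : F => f x = v)).card = 2 ∨
             (Finset.univ.filter (fun x : F => f x = v)).card = 0 := by
  have hn0 : 0 < n := hn.pos
  have hkn : 0 < k * n := Nat.mul_pos hk hn0
  haveI h2 : CharP F 2 := myChar2 hcard
  have htwo : (2 : F) = 0 := CharTwo.two_eq_zero
  have hpc : ∀ x : F, x ^ 2 ^ (k * n) = x := by
    intro x
    rw [← hcard]; exact FiniteField.pow_card x
  -- Frobenius distributes over the trace sums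
  have hsum_pow : ∀ (m : ℕ) (s : Finset ℕ) (g : ℕ → F),
      (∑ i ∈ s, g i) ^ 2 ^ m = ∑ i ∈ s, (g i) ^ 2 ^ m := by
    intro m s g
    have := map_sum (iterateFrobenius F 2 m) g s
    simp only [iterateFrobenius_def] at this
    exact this
  -- trace lands in F_q
  have h_tr_fq : ∀ x : F, (tr x) ^ 2 ^ k = tr x := by
    intro x
    rw [htrdef, hsum_pow]
    have hterm : ∀ i, (x ^ 2 ^ (k * i)) ^ 2 ^ k = x ^ 2 ^ (k * (i + 1)) := by
      intro i
      rw [← pow_mul, ← pow_add, Nat.mul_succ]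
    rw [Finset.sum_congr rfl fun i _ => hterm i]
    have h1 : ∑ i ∈ Finset.range (n + 1), x ^ 2 ^ (k * i)
        = (∑ i ∈ Finset.range n, x ^ 2 ^ (k * (i + 1))) + x ^ 2 ^ (k * 0) :=
      Finset.sum_range_succ' _ n
    have h2' : ∑ i ∈ Finset.range (n + 1), x ^ 2 ^ (k * i)
        = (∑ i ∈ Finset.range n, x ^ 2 ^ (k * i)) + x ^ 2 ^ (k * n) :=
      Finset.sum_range_succ _ n
    have h3 : x ^ 2 ^ (k * n) = x ^ 2 ^ (k * 0) := by
      rw [hpc x, Nat.mul_zero, pow_zero, pow_one]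
    rw [h1, h3] at h2'
    exact add_right_cancel h2'
  -- additivity of trace
  have h_tr_add : ∀ x y : F, tr (x + y) = tr x + tr y := by
    intro x y
    rw [htrdef, htrdef, htrdef, ← Finset.sum_add_distrib]
    exact Finset.sum_congr rfl fun i _ => add_pow_char_pow (R := F) (p := 2) (n := k * i) (x := x) (y := y)
  -- F_q-linearity
  have h_tr_smul : ∀ c x : F, c ^ 2 ^ k = c → tr (c * x) = c * tr x := by
    intro c x hc
    rw [htrdef, htrdef, Finset.mul_sum]
    refine Finset.sum_congr rfl fun i _ => ?_
    rw [mul_pow, myFixPow hc i]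
  -- trace of squares
  have h_tr_sq : ∀ x : F, tr (x ^ 2) = (tr x) ^ 2 := by
    intro x
    rw [htrdef, htrdef]
    have := hsum_pow 1 (Finset.range n) (fun i => x ^ 2 ^ (k * i))
    rw [pow_one] at this
    rw [this]
    refine Finset.sum_congr rfl fun i _ => ?_
    rw [← pow_mul, ← pow_mul, mul_comm]
  -- trace is identity on F_q (n odd)
  have h_tr_const : ∀ c : F, c ^ 2 ^ k = c → tr c = c := by
    intro c hc
    rw [htrdef]
    have : ∀ i, c ^ 2 ^ (k * i) = c := fun i => myFixPow hc i
    rw [Finset.sum_congr rfl fun i _ => this i, Finset.sum_const, Finset.card_range,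
      nsmul_eq_mul]
    obtain ⟨j, hj⟩ := hn
    rw [hj]
    push_cast
    linear_combination c * (j : F) * htwo
  -- absolute trace = Tr_k ∘ tr
  have hA_eq : ∀ x : F, ∑ i ∈ Finset.range (k * n), x ^ 2 ^ i
      = ∑ j ∈ Finset.range k, (tr x) ^ 2 ^ j := by
    intro x
    have hrhs : ∀ j, (tr x) ^ 2 ^ j = ∑ i ∈ Finset.range n, x ^ 2 ^ (k * i + j) := by
      intro j
      rw [htrdef, hsum_pow]
      refine Finset.sum_congr rfl fun i _ => ?_
      rw [← pow_mul, ← pow_add]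
    rw [Finset.sum_congr rfl fun j _ => hrhs j]
    rw [← Finset.sum_product']
    apply Finset.sum_nbij' (i := fun t => (t % k, t / k)) (j := fun p => k * p.2 + p.1)
    · intro t ht
      simp only [Finset.mem_product, Finset.mem_range] at *
      exact ⟨Nat.mod_lt t hk, Nat.div_lt_of_lt_mul (by omega)⟩
    · intro p hp
      simp only [Finset.mem_product, Finset.mem_range] at *
      calc k * p.2 + p.1 < k * p.2 + k := by omega
        _ = k * (p.2 + 1) := by ring
        _ ≤ k * n := Nat.mul_le_mul_left k hp.2
    · intro t ht
      exact Nat.div_add_mod t k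
    · intro p hp
      simp only [Finset.mem_product, Finset.mem_range] at hp
      ext
      · simp [Nat.mul_add_mod, Nat.mod_eq_of_lt hp.1]
      · simp [Nat.mul_add_div hk, Nat.div_eq_of_lt hp.1]
    · intro t ht
      rw [Nat.div_add_mod]
  -- fixed elements are closed under powers
  have hpowfix : ∀ (x : F) (j : ℕ), x ^ 2 ^ k = x → (x ^ j) ^ 2 ^ k = x ^ j := by
    intro x j hx
    rw [← pow_mul, mul_comm, pow_mul, hx]
  have hgfix : ∀ t : F, t ^ 2 ^ k = t → (t ^ 3 + b * t + a) ^ 2 ^ k = t ^ 3 + b * t + a := by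
    intro t ht
    rw [add_pow_char_pow (R := F) (p := 2), add_pow_char_pow (R := F) (p := 2),
      mul_pow, hpowfix t 3 ht, hb, ht, ha]
  -- the trace-condition element equals 1
  obtain ⟨X, hXdef⟩ : ∃ X : F, X = (b + 1) ^ 3 / a ^ 2 + 1 := ⟨_, rfl⟩
  rw [← hXdef] at htr
  have hcfix : (b + 1) ^ 2 ^ k = b + 1 := by
    rw [add_pow_char_pow (R := F) (p := 2), one_pow, hb]
  have hXfix : X ^ 2 ^ k = X := by
    rw [hXdef, add_pow_char_pow (R := F) (p := 2), one_pow, div_pow,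
      hpowfix _ 3 hcfix, hpowfix a 2 ha]
  have hT1 : ∑ i ∈ Finset.range k, X ^ 2 ^ i = 1 := by
    obtain ⟨T, hTdef⟩ : ∃ T, T = ∑ i ∈ Finset.range k, X ^ 2 ^ i := ⟨_, rfl⟩
    have hTT : T ^ 2 = T := by
      rw [hTdef]
      have h0 := hsum_pow 1 (Finset.range k) (fun i => X ^ 2 ^ i)
      rw [pow_one] at h0
      rw [h0]
      have hterm : ∀ i, (X ^ 2 ^ i) ^ 2 = X ^ 2 ^ (i + 1) := by
        intro i; rw [← pow_mul, ← pow_succ]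
      rw [Finset.sum_congr rfl fun i _ => hterm i]
      have h1 := Finset.sum_range_succ' (fun i => X ^ 2 ^ i) k
      have h2' := Finset.sum_range_succ (fun i => X ^ 2 ^ i) k
      rw [hXfix] at h2'
      rw [pow_zero, pow_one] at h1
      rw [h1] at h2'
      exact add_right_cancel h2'
    have hfac : T * (T - 1) = 0 := by linear_combination hTT
    rcases mul_eq_zero.mp hfac with h | h
    · rw [hTdef] at h; exact absurd h htr
    · rw [← hTdef]; linear_combination h
  -- existence of the special root d₀
  obtain ⟨d₀, hd₀fix, hd₀root⟩ := myExistsRootF k n hk hn0 hcard a b ha hb ha0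
    (by rw [hXdef] at hT1; exact hT1)
  have hd₀ne : d₀ ≠ 0 := by
    rintro rfl
    apply ha0
    linear_combination hd₀root
  -- uniqueness of the root
  have huniq : ∀ d : F, d ^ 2 ^ k = d → d ^ 3 + (b + 1) * d + a = 0 → d = d₀ := by
    intro d hdfix hdroot
    by_contra hne
    have hdsne : d + d₀ ≠ 0 := fun h => hne (by linear_combination h - d₀ * htwo)
    have hfac : (d + d₀) * (d ^ 2 + d * d₀ + d₀ ^ 2 + (b + 1)) = 0 := by
      linear_combination hdroot - hd₀root
        + (d ^ 2 * d₀ + d * d₀ ^ 2 + d₀ ^ 3 + (b + 1) * d₀) * htwo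
    have hc_eq : b + 1 = d ^ 2 + d * d₀ + d₀ ^ 2 := by
      rcases mul_eq_zero.mp hfac with h | h
      · exact absurd h hdsne
      · linear_combination h - (d ^ 2 + d * d₀ + d₀ ^ 2) * htwo
    have ha_eq : a = d ^ 2 * d₀ + d * d₀ ^ 2 := by
      linear_combination -hdroot + d * hc_eq + (a + d ^ 3) * htwo
    have hvv : (d ^ 3 + d ^ 2 * d₀ + d₀ ^ 3) ^ 2 + a * (d ^ 3 + d ^ 2 * d₀ + d₀ ^ 3)
        = (b + 1) ^ 3 + a ^ 2 := by
      linear_combination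
        (-((b + 1) ^ 2 + (b + 1) * (d ^ 2 + d * d₀ + d₀ ^ 2)
          + (d ^ 2 + d * d₀ + d₀ ^ 2) ^ 2)) * hc_eq
        + ((d ^ 3 + d ^ 2 * d₀ + d₀ ^ 3) - a - (d ^ 2 * d₀ + d * d₀ ^ 2)) * ha_eq
        + (-(d * d₀ ^ 5 + 2 * d ^ 2 * d₀ ^ 4 + 3 * d ^ 3 * d₀ ^ 3 + 2 * d ^ 4 * d₀ ^ 2)) * htwo
    obtain ⟨u, hudef⟩ : ∃ u : F, u = (d ^ 3 + d ^ 2 * d₀ + d₀ ^ 3) / a := ⟨_, rfl⟩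
    have hufix : u ^ 2 ^ k = u := by
      rw [hudef, div_pow, ha, add_pow_char_pow (R := F) (p := 2),
        add_pow_char_pow (R := F) (p := 2), mul_pow, hpowfix d 3 hdfix,
        hpowfix d 2 hdfix, hpowfix d₀ 3 hd₀fix, hd₀fix]
    have hid : u ^ 2 + u = X := by
      have hmul : a ^ 2 * (u ^ 2 + u) = a ^ 2 * X := by
        rw [hudef, hXdef]
        have h6 : a ^ 2 * (((d ^ 3 + d ^ 2 * d₀ + d₀ ^ 3) / a) ^ 2
            + (d ^ 3 + d ^ 2 * d₀ + d₀ ^ 3) / a)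
            = (d ^ 3 + d ^ 2 * d₀ + d₀ ^ 3) ^ 2 + a * (d ^ 3 + d ^ 2 * d₀ + d₀ ^ 3) := by
          field_simp
        have h7 : a ^ 2 * ((b + 1) ^ 3 / a ^ 2 + 1) = (b + 1) ^ 3 + a ^ 2 := by
          field_simp
        rw [h6, h7, hvv]
      exact mul_left_cancel₀ (pow_ne_zero 2 ha0) hmul
    have h0 : ∑ i ∈ Finset.range k, X ^ 2 ^ i = 0 := by
      calc ∑ i ∈ Finset.range k, X ^ 2 ^ i
          = ∑ i ∈ Finset.range k, (u ^ 2 + u) ^ 2 ^ i := by rw [hid]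
        _ = u ^ 2 ^ k + u := myTele h2 k u
        _ = 0 := by rw [hufix]; linear_combination u * htwo
    rw [hT1] at h0
    exact one_ne_zero h0
  -- trace of a fiber element determines tr v
  have hφ : ∀ x : F, tr (f x) = (tr x) ^ 2 + ((tr x) ^ 3 + b * tr x + a) * tr x := by
    intro x
    rw [hf x, h_tr_add, h_tr_sq, mul_comm x, h_tr_smul _ x (hgfix (tr x) (h_tr_fq x))]
  intro v
  set S : Finset F := Finset.univ.filter (fun x : F => f x = v) with hS
  have hmemS : ∀ x, x ∈ S ↔ f x = v := by intro x; simp [hS]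
  -- equal traces force equality in the fiber
  have claimA : ∀ x y, x ∈ S → y ∈ S → tr x = tr y → x = y := by
    intro x y hx hy hteq
    rw [hmemS] at hx hy
    have hxy : x ^ 2 + x * ((tr x) ^ 3 + b * tr x + a)
        = y ^ 2 + y * ((tr x) ^ 3 + b * tr x + a) := by
      have h1 := (hf x).symm.trans (hx.trans (hy.symm.trans (hf y)))
      rw [← hteq] at h1
      exact h1
    have hquad : (x + y) * (x + y + ((tr x) ^ 3 + b * tr x + a)) = 0 := by
      linear_combination hxy + (x * y + y ^ 2 + y * ((tr x) ^ 3 + b * tr x + a)) * htwo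
    rcases mul_eq_zero.mp hquad with h | h
    · linear_combination h - y * htwo
    · have htr0 : tr (x + y + ((tr x) ^ 3 + b * tr x + a)) = 0 := by
        rw [h, htrdef]
        simp
      rw [h_tr_add, h_tr_add, h_tr_const _ (hgfix (tr x) (h_tr_fq x)), ← hteq] at htr0
      have hg0 : (tr x) ^ 3 + b * tr x + a = 0 := by
        linear_combination htr0 - tr x * htwo
      rw [hg0, add_zero] at h
      linear_combination h - y * htwo
  -- trace difference of two fiber elements kills the cubic
  have claimB : ∀ x y, x ∈ S → y ∈ S →
      (tr x + tr y) * ((tr x + tr y) ^ 3 + (b + 1) * (tr x + tr y) + a) = 0 := by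
    intro x y hx hy
    rw [hmemS] at hx hy
    have h1 : tr v = (tr x) ^ 2 + ((tr x) ^ 3 + b * tr x + a) * tr x := by
      rw [← hx]; exact hφ x
    have h2' : tr v = (tr y) ^ 2 + ((tr y) ^ 3 + b * tr y + a) * tr y := by
      rw [← hy]; exact hφ y
    have heq : (tr x) ^ 2 + tr x * ((tr x) ^ 3 + b * tr x + a)
        = (tr y) ^ 2 + tr y * ((tr y) ^ 3 + b * tr y + a) := by
      linear_combination h2' - h1
    linear_combination heq + (tr y * a + tr y ^ 2 + tr y ^ 2 * b + tr y ^ 4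
      + tr x * tr y + tr x * tr y * b + 2 * tr x * tr y ^ 3 + 3 * tr x ^ 2 * tr y ^ 2
      + 2 * tr x ^ 3 * tr y) * htwo
  -- every fiber element has a partner
  have claimC : ∀ x, x ∈ S → ∃ y, y ∈ S ∧ y ≠ x := by
    intro x hx
    have hxv := (hmemS x).mp hx
    obtain ⟨t', ht'def⟩ : ∃ t', t' = tr x + d₀ := ⟨_, rfl⟩
    have ht'fix : t' ^ 2 ^ k = t' := by
      rw [ht'def, add_pow_char_pow (R := F) (p := 2), h_tr_fq, hd₀fix]
    have ht'ne : t' ≠ tr x := by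
      rw [ht'def]
      intro h
      exact hd₀ne (by linear_combination h)
    have htrv : tr v = t' ^ 2 + t' * (t' ^ 3 + b * t' + a) := by
      have h1 : tr v = (tr x) ^ 2 + ((tr x) ^ 3 + b * tr x + a) * tr x := by
        rw [← hxv]; exact hφ x
      rw [ht'def]
      linear_combination h1 - d₀ * hd₀root
        - (tr x * d₀ + tr x * d₀ * b + 2 * tr x * d₀ ^ 3 + 3 * tr x ^ 2 * d₀ ^ 2
          + 2 * tr x ^ 3 * d₀) * htwo
    rcases eq_or_ne (t' ^ 3 + b * t' + a) 0 with hg0 | hgne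
    · -- the partner is the square root of v
      obtain ⟨y, hydef⟩ : ∃ y : F, y = v ^ 2 ^ (k * n - 1) := ⟨_, rfl⟩
      have hysq : y ^ 2 = v := by
        rw [hydef, ← pow_mul, ← pow_succ, Nat.sub_add_cancel hkn, hpc]
      have htry : tr y = t' := by
        have hsq : (tr y) ^ 2 = t' ^ 2 := by
          rw [← h_tr_sq, hysq, htrv, hg0, mul_zero, add_zero]
        have hzero : (tr y + t') ^ 2 = 0 := by
          linear_combination hsq + (tr y * t' + t' ^ 2) * htwo
        have hz := pow_eq_zero_iff (n := 2) (by norm_num) |>.mp hzero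
        linear_combination hz - t' * htwo
      refine ⟨y, ?_, ?_⟩
      · rw [hmemS, hf, htry, hg0, mul_zero, add_zero, hysq]
      · intro h
        rw [h] at htry
        exact ht'ne htry.symm
    · -- the partner comes from solving the Artin–Schreier quadratic
      obtain ⟨gq, hgqdef⟩ : ∃ gq, gq = t' ^ 3 + b * t' + a := ⟨_, rfl⟩
      rw [← hgqdef] at hgne
      have hgqfix : gq ^ 2 ^ k = gq := by rw [hgqdef]; exact hgfix t' ht'fix
      have htrv' : tr v = t' ^ 2 + t' * gq := by rw [hgqdef]; exact htrv
      have hinvfix : ((gq ^ 2)⁻¹ : F) ^ 2 ^ k = (gq ^ 2)⁻¹ := by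
        rw [inv_pow, hpowfix gq 2 hgqfix]
      have hAv : ∑ i ∈ Finset.range (k * n), ((gq ^ 2)⁻¹ * v) ^ 2 ^ i = 0 := by
        rw [hA_eq, h_tr_smul _ v hinvfix]
        have hid2 : (gq ^ 2)⁻¹ * tr v = (t' * gq⁻¹) ^ 2 + t' * gq⁻¹ := by
          rw [htrv']
          field_simp
        rw [hid2, myTele h2 k (t' * gq⁻¹)]
        have hufix2 : (t' * gq⁻¹) ^ 2 ^ k = t' * gq⁻¹ := by
          rw [mul_pow, ht'fix, inv_pow, hgqfix]
        rw [hufix2]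
        linear_combination t' * gq⁻¹ * htwo
      obtain ⟨u, hu⟩ := myPsurj hkn hcard _ hAv
      obtain ⟨y₀, hy₀def⟩ : ∃ y₀, y₀ = gq * u := ⟨_, rfl⟩
      have hy₀ : y₀ ^ 2 + gq * y₀ = v := by
        have h5 : gq ^ 2 * (u ^ 2 + u) = v := by
          rw [hu]
          field_simp
        rw [hy₀def]
        linear_combination h5
      have hτ : (tr y₀) ^ 2 + gq * tr y₀ = t' ^ 2 + gq * t' := by
        have h5 : tr (y₀ ^ 2 + gq * y₀) = tr v := by rw [hy₀]
        rw [h_tr_add, h_tr_sq, h_tr_smul gq y₀ hgqfix, htrv'] at h5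
        linear_combination h5
      have hfacτ : (tr y₀ + t') * (tr y₀ + t' + gq) = 0 := by
        linear_combination hτ + (tr y₀ * t' + t' ^ 2 + gq * t') * htwo
      rcases mul_eq_zero.mp hfacτ with hca | hca
      · have htry : tr y₀ = t' := by linear_combination hca - t' * htwo
        refine ⟨y₀, ?_, ?_⟩
        · rw [hmemS, hf, htry, ← hgqdef]
          linear_combination hy₀
        · intro h
          rw [h] at htry
          exact ht'ne htry.symm
      · obtain ⟨y, hydef⟩ : ∃ y, y = y₀ + gq := ⟨_, rfl⟩
        have htry : tr y = t' := by
          rw [hydef, h_tr_add, h_tr_const gq hgqfix]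
          linear_combination hca - t' * htwo
        refine ⟨y, ?_, ?_⟩
        · rw [hmemS, hf, htry, ← hgqdef, hydef]
          linear_combination hy₀ + (y₀ * gq + gq ^ 2) * htwo
        · intro h
          rw [h] at htry
          exact ht'ne htry.symm
  -- conclusion
  rcases Finset.eq_empty_or_nonempty S with hSe | hSne
  · right
    rw [hSe]
    exact Finset.card_empty
  · left
    obtain ⟨x, hxS⟩ := hSne
    obtain ⟨y, hyS, hyx⟩ := claimC x hxS
    have hge : 1 < S.card := Finset.one_lt_card.mpr ⟨y, hyS, x, hxS, hyx⟩
    have hle : ¬ 2 < S.card := by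
      intro hgt
      obtain ⟨x1, x2, x3, h1, h2', h3, h12, h13, h23⟩ := Finset.two_lt_card_iff.mp hgt
      have ht23 : tr x2 ≠ tr x3 := fun h => h23 (claimA _ _ h2' h3 h)
      have hsum : ∀ z w, z ∈ S → w ∈ S → tr z ≠ tr w → tr z + tr w = d₀ := by
        intro z w hz hw hne
        have hB := claimB z w hz hw
        rcases mul_eq_zero.mp hB with h | h
        · exact absurd (by linear_combination h - tr w * htwo : tr z = tr w) hne
        · exact huniq _ (by rw [add_pow_char_pow (R := F) (p := 2), h_tr_fq, h_tr_fq]) h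
      have hd12 : tr x1 + tr x2 = d₀ :=
        hsum x1 x2 h1 h2' (fun h => h12 (claimA _ _ h1 h2' h))
      have hd13 : tr x1 + tr x3 = d₀ :=
        hsum x1 x3 h1 h3 (fun h => h13 (claimA _ _ h1 h3 h))
      exact ht23 (by linear_combination hd12 - hd13)
    omega
end

section
/- Let n, k ∈ ℕ with k < n, δ ∈ F_{2^n}, S = {x^{2^k} + x + δ : x ∈ F_{2^n}}, c ∈ F_{2^{gcd(n,k)}}*, s a positive integer, and h(x) = x^{2^k·s} + x^s + cx. Then f(x) = (x^{2^k} + x + δ)^s + cx is a 2-to-1 mapping on F_{2^n} if and only if h is a 2-to-1 mapping on S. -/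
/-- `f(x) = (x^{2^k} + x + δ)^s + cx` is 2-to-1 on `F_{2^n}` iff
`h(x) = x^{2^k·s} + x^s + cx` is 2-to-1 on `S = {x^{2^k} + x + δ : x ∈ F_{2^n}}`. -/
theorem stmt7 {F : Type*} [Field F] [Fintype F] [DecidableEq F] (n k s : ℕ)
    (hk : 0 < k) (hkn : k < n) (hs : 0 < s)
    (hcard : Fintype.card F = 2 ^ n)
    (δ c : F) (hc0 : c ≠ 0) (hcsub : c ^ (2 ^ Nat.gcd n k) = c)
    (S : Finset F) (hS : S = Finset.image (fun x : F => x ^ (2 ^ k) + x + δ) Finset.univ)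
    (f h : F → F)
    (hf : ∀ x, f x = (x ^ (2 ^ k) + x + δ) ^ s + c * x)
    (hh : ∀ x, h x = x ^ (2 ^ k * s) + x ^ s + c * x) :
    (∀ b : F, (Finset.univ.filter (fun x : F => f x = b)).card = 2 ∨
              (Finset.univ.filter (fun x : F => f x = b)).card = 0) ↔
    (∀ b : F, (S.filter (fun x => h x = b)).card = 2 ∨
              (S.filter (fun x => h x = b)).card = 0) := by
  classical
  -- characteristic 2
  haveI : CharP F (ringChar F) := ringChar.charP F
  obtain ⟨m, hp, hm⟩ := FiniteField.card F (ringChar F)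
  have hr2 : ringChar F = 2 := by
    have hdvd : ringChar F ∣ 2 ^ n := by
      rw [← hcard, hm]; exact dvd_pow_self _ (by positivity)
    exact (Nat.prime_dvd_prime_iff_eq hp Nat.prime_two).mp (hp.dvd_of_dvd_pow hdvd)
  haveI hC2 : CharP F 2 := hr2 ▸ ringChar.charP F
  haveI : Fact (Nat.Prime 2) := ⟨Nat.prime_two⟩
  have frob : ∀ a b : F, (a + b) ^ (2 ^ k) = a ^ (2 ^ k) + b ^ (2 ^ k) := fun a b =>
    add_pow_char_pow a b 2 k
  have htwo : ∀ a : F, a + a = 0 := fun a => by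
    have : (2 : F) = 0 := CharP.cast_eq_zero F 2
    calc a + a = 2 * a := by ring
    _ = 0 := by rw [this, zero_mul]
  -- c is fixed by the 2^k Frobenius
  have hc2k : c ^ (2 ^ k) = c := by
    obtain ⟨m, hm⟩ := Nat.gcd_dvd_right n k
    have key : ∀ j : ℕ, c ^ ((2 ^ Nat.gcd n k) ^ j) = c := by
      intro j
      induction j with
      | zero => simp
      | succ j ih => rw [pow_succ, pow_mul, ih, hcsub]
    rw [hm, pow_mul]
    exact key m
  -- key identity: h (g x) = G (f x) where G b = b^{2^k} + b + cδ
  have hg : ∀ x : F, h (x ^ (2 ^ k) + x + δ) = (f x) ^ (2 ^ k) + f x + c * δ := by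
    intro x
    rw [hh, hf]
    rw [frob, mul_pow, hc2k, ← pow_mul, mul_comm (2 ^ k) s]
    ring
  -- fiber correspondence
  have key : ∀ b : F,
      (Finset.univ.filter (fun x : F => f x = b)).card
        = (S.filter (fun y => h y = b ^ (2 ^ k) + b + c * δ)).card := by
    intro b
    apply Finset.card_bij (fun x _ => x ^ (2 ^ k) + x + δ)
    · intro x hx
      simp only [Finset.mem_filter, Finset.mem_univ, true_and] at hx
      simp only [Finset.mem_filter, hS, Finset.mem_image]
      exact ⟨⟨x, Finset.mem_univ x, rfl⟩, by rw [hg x, hx]⟩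
    · intro x1 hx1 x2 hx2 hgx
      simp only [Finset.mem_filter, Finset.mem_univ, true_and] at hx1 hx2
      rw [hf] at hx1 hx2
      have : c * x1 = c * x2 := by
        have := hx1.trans hx2.symm
        rw [hgx] at this
        exact add_left_cancel this
      exact mul_left_cancel₀ hc0 this
    · intro y hy
      simp only [Finset.mem_filter] at hy
      obtain ⟨hyS, hyh⟩ := hy
      refine ⟨c⁻¹ * (b + y ^ s), ?_, ?_⟩
      · -- first show g x = y
        have hgx : (c⁻¹ * (b + y ^ s)) ^ (2 ^ k) + (c⁻¹ * (b + y ^ s)) + δ = y := by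
          rw [mul_pow, frob, inv_pow, hc2k, ← pow_mul]
          rw [hh] at hyh
          have h2 : (2 : F) = 0 := CharP.cast_eq_zero F 2
          field_simp
          linear_combination (-1 : F) * hyh + (y ^ s + y ^ (s * 2 ^ k)) * h2
        simp only [Finset.mem_filter, Finset.mem_univ, true_and, hf, hgx]
        field_simp
        linear_combination y ^ s * (CharP.cast_eq_zero F 2 : (2:F) = 0)
      · exact by
          have hgx : (c⁻¹ * (b + y ^ s)) ^ (2 ^ k) + (c⁻¹ * (b + y ^ s)) + δ = y := by
            rw [mul_pow, frob, inv_pow, hc2k, ← pow_mul]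
            rw [hh] at hyh
            field_simp
            linear_combination (-1 : F) * hyh + (y ^ s + y ^ (s * 2 ^ k)) * (CharP.cast_eq_zero F 2 : (2:F) = 0)
          exact hgx
  -- conclusion
  constructor
  · intro H b
    by_cases hb : ∃ a : F, a ^ (2 ^ k) + a + c * δ = b
    · obtain ⟨a, ha⟩ := hb
      rw [← ha, ← key a]
      exact H a
    · right
      rw [Finset.card_eq_zero, Finset.filter_eq_empty_iff]
      intro y hyS hyb
      rw [hS, Finset.mem_image] at hyS
      obtain ⟨x, -, hx⟩ := hyS
      exact hb ⟨f x, by rw [← hg x, hx, hyb]⟩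
  · intro H b
    rw [key b]
    exact H (b ^ (2 ^ k) + b + c * δ)
end

section
/- Let m ∈ ℕ be even and δ ∈ F_{2^{2m}} with Tr_{2m}(δ) = 1. Then f(x) = (x² + x + δ)^{2^{2m-2} + 2^{m-2}} + x is a 2-to-1 mapping on F_{2^{2m}}. -/
/-- For even `m` and `Tr_{2m}(δ) = 1`, `f(x) = (x²+x+δ)^{2^{2m-2}+2^{m-2}} + x` is
2-to-1 on `F_{2^{2m}}`. -/
theorem stmt8 {F : Type*} [Field F] [Fintype F] [DecidableEq F] (m : ℕ)
    (hm : 0 < m) (hmeven : Even m)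
    (hcard : Fintype.card F = 2 ^ (2 * m))
    (δ : F) (htr : ∑ i ∈ Finset.range (2 * m), δ ^ (2 ^ i) = 1)
    (f : F → F)
    (hf : ∀ x, f x = (x ^ 2 + x + δ) ^ (2 ^ (2 * m - 2) + 2 ^ (m - 2)) + x) :
    ∀ b : F, (Finset.univ.filter (fun x : F => f x = b)).card = 2 ∨
             (Finset.univ.filter (fun x : F => f x = b)).card = 0 := by
  intro b
  have h2m : 2 ≤ m := by rcases hmeven with ⟨k, hk⟩; omega
  -- characteristic 2 basics
  have htwo : (2 : F) = 0 := by
    have hc : ((Fintype.card F : ℕ) : F) = 0 := FiniteField.cast_card_eq_zero F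
    rw [hcard] at hc
    push_cast at hc
    exact (pow_eq_zero_iff (by positivity : 2 * m ≠ 0)).mp hc
  have hself : ∀ a : F, a + a = 0 := fun a => by linear_combination a * htwo
  have hcanc : ∀ a b : F, a + b = 0 → a = b := fun a b h => by
    linear_combination h - b * htwo
  have hsq : ∀ a b : F, (a + b) ^ 2 = a ^ 2 + b ^ 2 := fun a b => by
    linear_combination (a * b) * htwo
  have hpow : ∀ (k : ℕ) (a b : F), (a + b) ^ (2 ^ k) = a ^ (2 ^ k) + b ^ (2 ^ k) := by
    intro k
    induction k with
    | zero => intro a b; simp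
    | succ k ih =>
      intro a b
      rw [pow_succ, pow_mul, pow_mul, pow_mul, ih, hsq]
  have hpow4 : ∀ a b : F, (a + b) ^ 4 = a ^ 4 + b ^ 4 := fun a b => by
    simpa using hpow 2 a b
  have hF : ∀ x : F, x ^ (2 ^ (2 * m)) = x := fun x => by
    rw [← hcard]; exact FiniteField.pow_card x
  have hxqq : ∀ x : F, (x ^ (2 ^ m)) ^ (2 ^ m) = x := fun x => by
    rw [← pow_mul, ← pow_add, show m + m = 2 * m by ring]; exact hF x
  -- exponent arithmetic
  have he4 : (2 ^ (2 * m - 2) + 2 ^ (m - 2)) * 4 = 2 ^ (2 * m) + 2 ^ m := by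
    have h1 : 2 ^ (2 * m - 2) * 2 ^ 2 = 2 ^ (2 * m) := by
      rw [← pow_add]; congr 1; omega
    have h2 : 2 ^ (m - 2) * 2 ^ 2 = 2 ^ m := by
      rw [← pow_add]; congr 1; omega
    norm_num at h1 h2
    linarith [h1, h2]
  -- 4th power of the e-th power map
  have hg4 : ∀ z : F, (z ^ (2 ^ (2 * m - 2) + 2 ^ (m - 2))) ^ 4 = z * z ^ (2 ^ m) := by
    intro z
    rw [← pow_mul, he4, pow_add, hF z]
  -- the e-th power map lands in the subfield F_{2^m}
  have hgq : ∀ z : F, (z ^ (2 ^ (2 * m - 2) + 2 ^ (m - 2))) ^ (2 ^ m)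
      = z ^ (2 ^ (2 * m - 2) + 2 ^ (m - 2)) := by
    intro z
    set g := z ^ (2 ^ (2 * m - 2) + 2 ^ (m - 2)) with hg
    have h1 : (g ^ (2 ^ m)) ^ 4 = g ^ 4 := by
      rw [pow_right_comm, hg4, mul_pow, hxqq]; ring
    have h2 : (g ^ (2 ^ m) + g) ^ 4 = 0 := by
      rw [hpow4, h1]; exact hself _
    exact hcanc _ _ ((pow_eq_zero_iff (by norm_num : (4:ℕ) ≠ 0)).mp h2)
  -- telescoping trace sum
  have htel : ∀ (z : F) (n : ℕ),
      ∑ i ∈ Finset.range n, (z ^ 2 + z) ^ (2 ^ i) = z ^ (2 ^ n) + z := by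
    intro z n
    induction n with
    | zero => simpa using (hself z).symm
    | succ n ih =>
      rw [Finset.sum_range_succ, ih, hpow n (z ^ 2) z]
      have h1 : (z ^ 2) ^ (2 ^ n) = z ^ (2 ^ (n + 1)) := by
        rw [← pow_mul]; congr 1; rw [pow_succ]; ring
      rw [h1]
      linear_combination (z ^ (2 ^ n)) * htwo
  -- splitting the absolute trace of δ
  have hsplit : (∑ i ∈ Finset.range m, δ ^ (2 ^ i))
      + ∑ i ∈ Finset.range m, (δ ^ (2 ^ m)) ^ (2 ^ i) = 1 := by
    have hterm : ∀ i : ℕ, (δ ^ (2 ^ m)) ^ (2 ^ i) = δ ^ (2 ^ (m + i)) := fun i => by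
      rw [← pow_mul, ← pow_add]
    calc (∑ i ∈ Finset.range m, δ ^ (2 ^ i))
          + ∑ i ∈ Finset.range m, (δ ^ (2 ^ m)) ^ (2 ^ i)
        = ∑ i ∈ Finset.range (m + m), δ ^ (2 ^ i) := by
          rw [Finset.sum_range_add]
          congr 1
          exact Finset.sum_congr rfl fun i _ => hterm i
      _ = 1 := by rw [show m + m = 2 * m by ring]; exact htr
  -- the auxiliary quantity A
  set A : F → F := fun x =>
    (x + x ^ (2 ^ m)) ^ 2 + (x + x ^ (2 ^ m)) + (δ + δ ^ (2 ^ m)) with hAdef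
  have hTq : ∀ x : F, (x + x ^ (2 ^ m)) ^ (2 ^ m) = x + x ^ (2 ^ m) := by
    intro x; rw [hpow, hxqq]; ring
  have hAq : ∀ x : F, (A x) ^ (2 ^ m) = A x := by
    intro x
    show ((x + x ^ (2 ^ m)) ^ 2 + (x + x ^ (2 ^ m)) + (δ + δ ^ (2 ^ m))) ^ (2 ^ m) = _
    rw [hpow m ((x + x ^ (2 ^ m)) ^ 2 + (x + x ^ (2 ^ m))) (δ + δ ^ (2 ^ m)),
      hpow m ((x + x ^ (2 ^ m)) ^ 2) (x + x ^ (2 ^ m)),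
      hpow m δ (δ ^ (2 ^ m)),
      pow_right_comm (x + x ^ (2 ^ m)) 2 (2 ^ m), hTq, hxqq]
    show _ = (x + x ^ (2 ^ m)) ^ 2 + (x + x ^ (2 ^ m)) + (δ + δ ^ (2 ^ m))
    ring
  have hTA : ∀ x : F, ∑ i ∈ Finset.range m, (A x) ^ (2 ^ i) = 1 := by
    intro x
    have hterm : ∀ i ∈ Finset.range m, (A x) ^ (2 ^ i)
        = (((x + x ^ (2 ^ m)) ^ 2 + (x + x ^ (2 ^ m)))) ^ (2 ^ i)
          + (δ ^ (2 ^ i) + (δ ^ (2 ^ m)) ^ (2 ^ i)) := by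
      intro i _
      show (((x + x ^ (2 ^ m)) ^ 2 + (x + x ^ (2 ^ m))) + (δ + δ ^ (2 ^ m))) ^ (2 ^ i) = _
      rw [hpow i ((x + x ^ (2 ^ m)) ^ 2 + (x + x ^ (2 ^ m))) (δ + δ ^ (2 ^ m)),
        hpow i δ (δ ^ (2 ^ m))]
    rw [Finset.sum_congr rfl hterm, Finset.sum_add_distrib, Finset.sum_add_distrib,
      htel, hTq, hself, zero_add, hsplit]
  have hAne0 : ∀ x : F, A x ≠ 0 := by
    intro x h
    have h1 := hTA x
    rw [h] at h1
    simp at h1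
  have hAne1 : ∀ x : F, A x ≠ 1 := by
    intro x h
    have h1 := hTA x
    rw [h] at h1
    simp at h1
    obtain ⟨k, hk⟩ := hmeven
    rw [hk] at h1
    push_cast at h1
    rw [show ((k : F) + k) = 0 from hself k] at h1
    exact zero_ne_one h1
  -- the central 4th-power identity
  have hED : ∀ x d : F, d ^ (2 ^ m) = d →
      (((x + d) ^ 2 + (x + d) + δ) ^ (2 ^ (2 * m - 2) + 2 ^ (m - 2))
        + (x ^ 2 + x + δ) ^ (2 ^ (2 * m - 2) + 2 ^ (m - 2)) + d) ^ 4
      = (d ^ 2 + d) * A x + (d ^ 2 + d) ^ 2 + d ^ 4 := by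
    intro x d hdq
    have hcq : (d ^ 2 + d) ^ (2 ^ m) = d ^ 2 + d := by
      rw [hpow m (d ^ 2) d, pow_right_comm d 2 (2 ^ m), hdq]
    have hyq : (x ^ 2 + x + δ) ^ (2 ^ m)
        = (x ^ (2 ^ m)) ^ 2 + x ^ (2 ^ m) + δ ^ (2 ^ m) := by
      rw [hpow m (x ^ 2 + x) δ, hpow m (x ^ 2) x, pow_right_comm x 2 (2 ^ m)]
    have hy'c : (x + d) ^ 2 + (x + d) + δ = (x ^ 2 + x + δ) + (d ^ 2 + d) := by
      linear_combination (x * d) * htwo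
    have hy'q : ((x + d) ^ 2 + (x + d) + δ) ^ (2 ^ m)
        = ((x ^ (2 ^ m)) ^ 2 + x ^ (2 ^ m) + δ ^ (2 ^ m)) + (d ^ 2 + d) := by
      rw [hy'c, hpow m (x ^ 2 + x + δ) (d ^ 2 + d), hcq, hyq]
    rw [hpow4, hpow4, hg4, hg4, hy'q, hyq, hy'c]
    simp only [hAdef]
    linear_combination ((x ^ 2 + x + δ) * ((x ^ (2 ^ m)) ^ 2 + x ^ (2 ^ m) + δ ^ (2 ^ m))
      - x * (x ^ (2 ^ m)) * (d ^ 2 + d)) * htwo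
  -- the key characterization of collisions
  have hkey : ∀ x d : F, f (x + d) = f x ↔ (d = 0 ∨ d * (A x + 1) = A x) := by
    intro x d
    rw [hf, hf]
    constructor
    · intro h
      have hgg : ((x + d) ^ 2 + (x + d) + δ) ^ (2 ^ (2 * m - 2) + 2 ^ (m - 2))
          + (x ^ 2 + x + δ) ^ (2 ^ (2 * m - 2) + 2 ^ (m - 2)) = d := by
        linear_combination h + ((x ^ 2 + x + δ) ^ (2 ^ (2 * m - 2) + 2 ^ (m - 2)) - d) * htwo
      have hdq : d ^ (2 ^ m) = d := by
        rw [← hgg, hpow, hgq, hgq]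
      have h1 := hED x d hdq
      rw [hgg, hself d] at h1
      norm_num at h1
      rcases eq_or_ne d 0 with h0 | h0
      · exact Or.inl h0
      · right
        have h2 : d * ((d + 1) * A x + d) = 0 := by
          linear_combination -h1 - (d ^ 4 + d ^ 3) * htwo
        rcases mul_eq_zero.mp h2 with h3 | h3
        · exact absurd h3 h0
        · linear_combination h3 - (A x) * htwo
    · rintro (rfl | hd)
      · rw [add_zero]
      · have hA1 : A x + 1 ≠ 0 := fun hc => hAne1 x (hcanc _ _ hc)
        have hdq : d ^ (2 ^ m) = d := by
          have h1 : (d * (A x + 1)) ^ (2 ^ m) = (A x) ^ (2 ^ m) := by rw [hd]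
          rw [mul_pow, hpow m (A x) 1, hAq, one_pow] at h1
          exact mul_right_cancel₀ hA1 (h1.trans hd.symm)
        have h40 : (((x + d) ^ 2 + (x + d) + δ) ^ (2 ^ (2 * m - 2) + 2 ^ (m - 2))
            + (x ^ 2 + x + δ) ^ (2 ^ (2 * m - 2) + 2 ^ (m - 2)) + d) ^ 4 = 0 := by
          rw [hED x d hdq]
          linear_combination d * hd + (d * A x + d ^ 4 + d ^ 3) * htwo
        have h0 : ((x + d) ^ 2 + (x + d) + δ) ^ (2 ^ (2 * m - 2) + 2 ^ (m - 2))
            + (x ^ 2 + x + δ) ^ (2 ^ (2 * m - 2) + 2 ^ (m - 2)) + d = 0 :=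
          (pow_eq_zero_iff (by norm_num : (4:ℕ) ≠ 0)).mp h40
        linear_combination h0 - ((x ^ 2 + x + δ) ^ (2 ^ (2 * m - 2) + 2 ^ (m - 2))) * htwo
  -- main counting argument
  by_cases hex : ∃ x, f x = b
  · obtain ⟨x₀, hx₀⟩ := hex
    have hA1 : A x₀ + 1 ≠ 0 := fun hc => hAne1 x₀ (hcanc _ _ hc)
    have hd₀ : (A x₀ / (A x₀ + 1)) * (A x₀ + 1) = A x₀ := div_mul_cancel₀ _ hA1
    have hd₀ne : A x₀ / (A x₀ + 1) ≠ 0 := div_ne_zero (hAne0 x₀) hA1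
    left
    have hset : Finset.univ.filter (fun x : F => f x = b)
        = {x₀, x₀ + A x₀ / (A x₀ + 1)} := by
      ext z
      simp only [Finset.mem_filter, Finset.mem_univ, true_and, Finset.mem_insert,
        Finset.mem_singleton]
      constructor
      · intro hz
        have hzz : f (x₀ + (z + x₀)) = f x₀ := by
          rw [show x₀ + (z + x₀) = z by linear_combination x₀ * htwo, hz, hx₀]
        rcases (hkey x₀ (z + x₀)).mp hzz with h0 | h1
        · exact Or.inl (hcanc z x₀ h0)
        · right
          have h2 : z + x₀ = A x₀ / (A x₀ + 1) :=
            mul_right_cancel₀ hA1 (h1.trans hd₀.symm)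
          linear_combination h2 - x₀ * htwo
      · rintro (rfl | rfl)
        · exact hx₀
        · exact ((hkey x₀ (A x₀ / (A x₀ + 1))).mpr (Or.inr hd₀)).trans hx₀
    rw [hset]
    apply Finset.card_pair
    intro hc
    apply hd₀ne
    linear_combination -hc
  · right
    rw [Finset.card_eq_zero, Finset.filter_eq_empty_iff]
    push_neg at hex
    intro x _
    exact hex x
end

section
/- Let m ∈ ℕ be even and δ ∈ F_{2^{2m}} with Tr_{2m}(δ) = 1. Then I(x) = x + 1 + 1/(x^{2^{m+1}} + x^{2^m} + x² + x + δ + δ^{2^m} + 1) is a fixed-point-free involution on F_{2^{2m}}, where the denominator is nonzero for all x. -/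
/-- For even `m` and `Tr_{2m}(δ) = 1`,
`I(x) = x + 1 + 1/(x^{2^{m+1}} + x^{2^m} + x² + x + δ + δ^{2^m} + 1)` is a
fixed-point-free involution on `F_{2^{2m}}`; in particular the denominator never vanishes. -/
theorem stmt9 {F : Type*} [Field F] [Fintype F] (m : ℕ)
    (hm : 0 < m) (hmeven : Even m)
    (hcard : Fintype.card F = 2 ^ (2 * m))
    (δ : F) (htr : ∑ i ∈ Finset.range (2 * m), δ ^ (2 ^ i) = 1)
    (I : F → F)
    (hI : ∀ x, I x = x + 1 +
      (x ^ (2 ^ (m + 1)) + x ^ (2 ^ m) + x ^ 2 + x + δ + δ ^ (2 ^ m) + 1)⁻¹) :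
    (∀ x : F, x ^ (2 ^ (m + 1)) + x ^ (2 ^ m) + x ^ 2 + x + δ + δ ^ (2 ^ m) + 1 ≠ 0) ∧
    (∀ x : F, I (I x) = x) ∧ (∀ x : F, I x ≠ x) := by
  classical
  -- characteristic 2
  have hc0 : ((Fintype.card F : ℕ) : F) = 0 := FiniteField.cast_card_eq_zero F
  rw [hcard] at hc0
  push_cast at hc0
  have h2 : (2 : F) = 0 := by
    have : (2 : F) ^ (2 * m) = 0 := hc0
    exact pow_eq_zero_iff (by omega) |>.mp this
  haveI hchar : CharP F 2 := by
    have hr : ringChar F = 2 :=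
      CharP.ringChar_of_prime_eq_zero Nat.prime_two (by exact_mod_cast h2)
    exact hr ▸ ringChar.charP F
  haveI : Fact (Nat.Prime 2) := ⟨Nat.prime_two⟩
  have hfrob : ∀ (a b : F) (k : ℕ), (a + b) ^ 2 ^ k = a ^ 2 ^ k + b ^ 2 ^ k := by
    intro a b k
    exact add_pow_char_pow (p := 2) a b k
  have hself : ∀ a : F, a + a = 0 := fun a => by
    rw [← two_mul, h2, zero_mul]
  have hsq : ∀ a b : F, (a + b) ^ 2 = a ^ 2 + b ^ 2 := by
    intro a b
    have := hfrob a b 1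
    simpa using this
  -- x ^ (2^(2m)) = x
  have hpowcard : ∀ x : F, x ^ 2 ^ (2 * m) = x := by
    intro x
    have := FiniteField.pow_card x
    rwa [hcard] at this
  -- trace computation
  have hmF : (m : F) = 0 := by
    obtain ⟨k, hk⟩ := hmeven
    have : (m : F) = 2 * k := by rw [hk]; push_cast; ring
    rw [this, h2, zero_mul]
  have key : ∀ a : F, a ^ 2 ^ m = a →
      ∑ i ∈ Finset.range m, (a ^ 2 + a + (δ + δ ^ 2 ^ m)) ^ 2 ^ i = 1 := by
    intro a ha
    have expand : ∀ i : ℕ, (a ^ 2 + a + (δ + δ ^ 2 ^ m)) ^ 2 ^ i =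
        ((a ^ 2) ^ 2 ^ i + a ^ 2 ^ i) + (δ ^ 2 ^ i + (δ ^ 2 ^ m) ^ 2 ^ i) := by
      intro i
      rw [hfrob, hfrob, hfrob]
    rw [Finset.sum_congr rfl (fun i _ => expand i), Finset.sum_add_distrib]
    have hS1 : ∑ i ∈ Finset.range m, ((a ^ 2) ^ 2 ^ i + a ^ 2 ^ i) = 0 := by
      have : ∀ i : ℕ, (a ^ 2) ^ 2 ^ i + a ^ 2 ^ i = a ^ 2 ^ (i + 1) - a ^ 2 ^ i := by
        intro i
        rw [CharTwo.sub_eq_add, ← pow_mul, ← pow_succ']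
      rw [Finset.sum_congr rfl (fun i _ => this i), Finset.sum_range_sub (fun i => a ^ 2 ^ i),
        pow_zero, pow_one, ha, sub_self]
    have hS2 : ∑ i ∈ Finset.range m, (δ ^ 2 ^ i + (δ ^ 2 ^ m) ^ 2 ^ i) = 1 := by
      rw [Finset.sum_add_distrib]
      have h1 : ∀ i : ℕ, (δ ^ 2 ^ m) ^ 2 ^ i = δ ^ 2 ^ (m + i) := by
        intro i; rw [← pow_mul, ← pow_add]
      rw [Finset.sum_congr rfl (fun i _ => h1 i)]
      have := htr
      rw [two_mul, Finset.sum_range_add] at this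
      exact this
    rw [hS1, hS2, zero_add]
  -- denominator and its properties
  set c : F := δ + δ ^ 2 ^ m with hc
  have hyq : ∀ x : F, (x ^ 2 ^ m + x) ^ 2 ^ m = x ^ 2 ^ m + x := by
    intro x
    rw [hfrob, ← pow_mul, ← pow_add, ← two_mul, hpowcard, add_comm]
  have hD : ∀ x : F, x ^ 2 ^ (m + 1) + x ^ 2 ^ m + x ^ 2 + x + δ + δ ^ 2 ^ m + 1 =
      (x ^ 2 ^ m + x) ^ 2 + (x ^ 2 ^ m + x) + c + 1 := by
    intro x
    rw [hsq, ← pow_mul]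
    have : 2 ^ m * 2 = 2 ^ (m + 1) := by rw [pow_succ]
    rw [this, hc]
    ring
  -- denominator never 0 and never 1
  have hDne0 : ∀ x : F, x ^ 2 ^ (m + 1) + x ^ 2 ^ m + x ^ 2 + x + δ + δ ^ 2 ^ m + 1 ≠ 0 := by
    intro x hx
    rw [hD x] at hx
    set a := x ^ 2 ^ m + x with hadef
    have ha : a ^ 2 ^ m = a := hyq x
    have hb : a ^ 2 + a + c = 1 := by
      have := hx
      have h1 : a ^ 2 + a + c = a ^ 2 + a + c + 1 + 1 := by
        rw [add_assoc _ 1 1, hself (1 : F), add_zero]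
      rw [h1, hx, zero_add]
    have hk := key a ha
    rw [Finset.sum_congr rfl (fun i _ => by rw [hb, one_pow])] at hk
    simp only [Finset.sum_const, Finset.card_range, nsmul_eq_mul, mul_one] at hk
    rw [hmF] at hk
    exact one_ne_zero hk.symm
  have hDne1 : ∀ x : F, x ^ 2 ^ (m + 1) + x ^ 2 ^ m + x ^ 2 + x + δ + δ ^ 2 ^ m + 1 ≠ 1 := by
    intro x hx
    rw [hD x] at hx
    set a := x ^ 2 ^ m + x with hadef
    have ha : a ^ 2 ^ m = a := hyq x
    have hb : a ^ 2 + a + c = 0 := by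
      have := add_right_cancel (a := a ^ 2 + a + c) (b := 1) (c := (0 : F)) (by rw [hx, zero_add])
      exact this
    have hk := key a ha
    rw [Finset.sum_congr rfl (fun i _ => by rw [hb, zero_pow (pow_ne_zero i two_ne_zero)])] at hk
    simp at hk
  -- the denominator is fixed by Frobenius
  have hDfix : ∀ x : F,
      (x ^ 2 ^ (m + 1) + x ^ 2 ^ m + x ^ 2 + x + δ + δ ^ 2 ^ m + 1) ^ 2 ^ m =
      x ^ 2 ^ (m + 1) + x ^ 2 ^ m + x ^ 2 + x + δ + δ ^ 2 ^ m + 1 := by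
    intro x
    have hcfix : c ^ 2 ^ m = c := by
      rw [hc, hfrob, ← pow_mul, ← pow_add, ← two_mul, hpowcard, add_comm]
    have hsqfix : ((x ^ 2 ^ m + x) ^ 2) ^ 2 ^ m = (x ^ 2 ^ m + x) ^ 2 := by
      rw [← pow_mul, mul_comm, pow_mul, hyq x]
    rw [hD x, hfrob, hfrob, hfrob, one_pow, hyq x, hcfix, hsqfix]
  -- key: I preserves y = x^{2^m} + x
  refine ⟨hDne0, ?_, ?_⟩
  · intro x
    set D := x ^ 2 ^ (m + 1) + x ^ 2 ^ m + x ^ 2 + x + δ + δ ^ 2 ^ m + 1 with hDdef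
    set u := D⁻¹ with hu
    have hufix : u ^ 2 ^ m = u := by
      rw [hu, inv_pow, hDdef, hDfix x]
    have hz : I x = x + 1 + u := hI x
    -- y (I x) = y x
    have hy2 : (I x) ^ 2 ^ m + I x = x ^ 2 ^ m + x := by
      rw [hz, hfrob, hfrob, hufix, one_pow]
      ring_nf
      rw [h2]
      ring
    -- so D (I x) = D x
    have hD2 : (I x) ^ 2 ^ (m + 1) + (I x) ^ 2 ^ m + (I x) ^ 2 + I x + δ + δ ^ 2 ^ m + 1 = D := by
      rw [hD (I x), hy2, ← hD x]
    rw [hI (I x), hD2, ← hu, hz]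
    have : x + 1 + u + 1 + u = x + (1 + 1) + (u + u) := by ring
    rw [this, hself, hself, add_zero, add_zero]
  · intro x hfix
    have := hI x
    rw [hfix] at this
    set D := x ^ 2 ^ (m + 1) + x ^ 2 ^ m + x ^ 2 + x + δ + δ ^ 2 ^ m + 1 with hDdef
    have h1 : D⁻¹ = 1 := by
      have h0 : (1 : F) + D⁻¹ = 0 := by
        have := this.symm
        linear_combination this
      have : D⁻¹ = -1 := by linear_combination h0
      rw [this, CharTwo.neg_eq]
    have : D = 1 := inv_eq_one.mp h1
    exact hDne1 x this
end

section
/- Let m ∈ ℕ be even and δ ∈ F_{2^{2m}} with Tr_{2m}(δ) = 1. Then f(x) = (x² + x + δ)^{2^m + 1} + x is a 2-to-1 mapping on F_{2^{2m}}. -/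
/-!
Write `q = 2 ^ m`, `U = x² + x + δ` and `c = a² + a`. In characteristic two
`f (x + a) + f x = c U^q + c^q U + c^{q+1} + a`, and the right-hand side minus `a` is fixed by
`u ↦ u^q`; hence a collision `f (x + a) = f x` forces `a ∈ 𝔽_q`, after which it says exactly that
`b = a + 1` is a root of `X³ + X² + V X + 1`, where `V = U^q + U ∈ 𝔽_q` has `Tr_m(V) = Tr_{2m}(δ) = 1`.

For `C ∈ 𝔽_q` with `Tr_m(C) = 1` this cubic has exactly one root in `𝔽_q`. Two distinct roots
`t₁, t₂` would give, by Vieta, `C = s² + s + p² + p` with `s = t₁ + t₂` and `p = (t₁ + 1)/s`, so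
`Tr_m(C) = 0`. For existence, `z ↦ z + z⁻¹ + z⁻²` maps the trace-one elements of `𝔽_q` to
themselves and `z⁻¹` is a root of the cubic with `C = z + z⁻¹ + z⁻²`; by uniqueness this map is
injective, hence onto. Since `m` is even, `Tr_m(1) = 0`, so `V ≠ 1` and the root is not `b = 1`.
Thus every `x` has exactly one partner `x + a ≠ x` with the same image.
-/

open Finset

section TwoToOne

variable {F : Type*} [Field F]

/-- For `z ∈ 𝔽_{2^m}` this is the absolute trace `Tr_m(z)`. -/
def absTrace (m : ℕ) (z : F) : F := ∑ i ∈ range m, z ^ 2 ^ i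

def quadPowMap (m : ℕ) (δ x : F) : F := (x ^ 2 + x + δ) ^ (2 ^ m + 1) + x

theorem absTrace_one (m : ℕ) : absTrace m (1 : F) = m := by
  simp [absTrace]

theorem absTrace_zero (m : ℕ) : absTrace m (0 : F) = 0 := by
  simp [absTrace]

variable [CharP F 2] {m : ℕ}

theorem absTrace_add (u v : F) : absTrace m (u + v) = absTrace m u + absTrace m v := by
  simp only [absTrace, add_pow_char_pow, sum_add_distrib]

theorem absTrace_sq_add_self (z : F) : absTrace m (z ^ 2 + z) = z ^ 2 ^ m + z := by
  have hterm : ∀ i, (z ^ 2 + z) ^ 2 ^ i = z ^ 2 ^ (i + 1) - z ^ 2 ^ i := fun i => by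
    rw [add_pow_char_pow, ← pow_mul, ← pow_succ', CharTwo.sub_eq_add]
  rw [absTrace, sum_congr rfl fun i _ => hterm i, sum_range_sub (fun i => z ^ 2 ^ i), pow_zero, pow_one,
    CharTwo.sub_eq_add]

theorem absTrace_sq_add_self_of_pow_eq {z : F} (hz : z ^ 2 ^ m = z) :
    absTrace m (z ^ 2 + z) = 0 := by
  rw [absTrace_sq_add_self, hz, CharTwo.add_self_eq_zero]

theorem absTrace_two_mul (δ : F) : absTrace (2 * m) δ = absTrace m (δ ^ 2 ^ m + δ) := by
  rw [absTrace_add, add_comm, absTrace, two_mul, sum_range_add]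
  congr 1
  exact sum_congr rfl fun i _ => by rw [← pow_mul, ← pow_add]

theorem cubic_root_unique {C t₁ t₂ : F} (hC : absTrace m C = 1)
    (ht₁ : t₁ ^ 2 ^ m = t₁) (ht₂ : t₂ ^ 2 ^ m = t₂)
    (h₁ : t₁ ^ 3 + t₁ ^ 2 + C * t₁ + 1 = 0) (h₂ : t₂ ^ 3 + t₂ ^ 2 + C * t₂ + 1 = 0) :
    t₁ = t₂ := by
  by_contra hne
  set s := t₁ + t₂
  have hs : s ≠ 0 := fun h => hne (by grind)
  have hC_vieta : C = s ^ 2 + s + t₁ * t₂ := by grind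
  have hprod_vieta : t₁ * t₂ * (s + 1) = 1 := by grind
  set p := (t₁ + 1) / s
  have hp : p ^ 2 + p = t₁ * t₂ := by
    field_simp
    grind
  have hsq : s ^ 2 ^ m = s := by rw [add_pow_char_pow, ht₁, ht₂]
  have hpq : p ^ 2 ^ m = p := by rw [div_pow, add_pow_char_pow, one_pow, ht₁, hsq]
  have hC0 : absTrace m C = 0 := by
    rw [hC_vieta, ← hp, absTrace_add, absTrace_sq_add_self_of_pow_eq hsq,
      absTrace_sq_add_self_of_pow_eq hpq, add_zero]
  exact one_ne_zero (hC.symm.trans hC0)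

theorem exists_cubic_root [Finite F] {C : F} (hCq : C ^ 2 ^ m = C) (hC : absTrace m C = 1) :
    ∃ b : F, b ^ 2 ^ m = b ∧ b ^ 3 + b ^ 2 + C * b + 1 = 0 := by
  set A := {z : F | z ^ 2 ^ m = z ∧ absTrace m z = 1}
  set k := fun z : F => z + z⁻¹ + z⁻¹ ^ 2
  have hA0 : ∀ z ∈ A, z ≠ 0 := by
    rintro z ⟨-, hz⟩ rfl
    exact zero_ne_one ((absTrace_zero m).symm.trans hz)
  have hroot : ∀ z ∈ A, z⁻¹ ^ 3 + z⁻¹ ^ 2 + k z * z⁻¹ + 1 = 0 := fun z hz => by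
    have := hA0 z hz
    grind
  have hinvq : ∀ z ∈ A, z⁻¹ ^ 2 ^ m = z⁻¹ := fun z hz => by rw [inv_pow, hz.1]
  have hmaps : Set.MapsTo k A A := fun z hz => by
    refine ⟨?_, ?_⟩
    · simp only [k, add_pow_char_pow, pow_right_comm _ 2, hinvq z hz, hz.1]
    · rw [show k z = z + (z⁻¹ ^ 2 + z⁻¹) by ring, absTrace_add,
        absTrace_sq_add_self_of_pow_eq (hinvq z hz), hz.2, add_zero]
  have hinj : Set.InjOn k A := fun z₁ hz₁ z₂ hz₂ hk =>
    inv_injective <| cubic_root_unique (hmaps hz₁).2 (hinvq z₁ hz₁) (hinvq z₂ hz₂)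
      (hroot z₁ hz₁) (hk ▸ hroot z₂ hz₂)
  obtain ⟨z, hz, rfl⟩ :=
    ((A.toFinite.injOn_iff_bijOn_of_mapsTo hmaps).mp hinj).surjOn ⟨hCq, hC⟩
  exact ⟨z⁻¹, hinvq z hz, hroot z hz⟩

theorem existsUnique_cubic_root [Finite F] {C : F} (hCq : C ^ 2 ^ m = C)
    (hC : absTrace m C = 1) :
    ∃! b : F, b ^ 2 ^ m = b ∧ b ^ 3 + b ^ 2 + C * b + 1 = 0 := by
  obtain ⟨b, hb⟩ := exists_cubic_root hCq hC
  exact ⟨b, hb, fun t ht => cubic_root_unique hC ht.1 hb.1 ht.2 hb.2⟩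

theorem quadPowMap_add_add (δ x a : F) :
    quadPowMap m δ (x + a) + quadPowMap m δ x =
      (a ^ 2 + a) * (x ^ 2 + x + δ) ^ 2 ^ m + (a ^ 2 + a) ^ 2 ^ m * (x ^ 2 + x + δ)
        + (a ^ 2 + a) ^ 2 ^ m * (a ^ 2 + a) + a := by
  have hU : (x + a) ^ 2 + (x + a) + δ = (x ^ 2 + x + δ) + (a ^ 2 + a) := by grind
  rw [quadPowMap, quadPowMap, hU, pow_succ, pow_succ, add_pow_char_pow]
  grind

theorem quadPowMap_add_add_of_pow_eq {δ x a : F} (ha : a ^ 2 ^ m = a) :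
    quadPowMap m δ (x + a) + quadPowMap m δ x =
      a * ((a + 1) ^ 3 + (a + 1) ^ 2
        + ((x ^ 2 + x + δ) ^ 2 ^ m + (x ^ 2 + x + δ)) * (a + 1) + 1) := by
  have hc : (a ^ 2 + a) ^ 2 ^ m = a ^ 2 + a := by rw [add_pow_char_pow, pow_right_comm, ha]
  rw [quadPowMap_add_add, hc]
  grind

variable (hinv : ∀ u : F, (u ^ 2 ^ m) ^ 2 ^ m = u)
include hinv

theorem pow_eq_self_of_quadPowMap_add_eq {δ x a : F}
    (h : quadPowMap m δ (x + a) = quadPowMap m δ x) : a ^ 2 ^ m = a := by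
  have hsum := quadPowMap_add_add (m := m) δ x a
  rw [h, CharTwo.add_self_eq_zero] at hsum
  have ha : a = (a ^ 2 + a) * (x ^ 2 + x + δ) ^ 2 ^ m + (a ^ 2 + a) ^ 2 ^ m * (x ^ 2 + x + δ)
      + (a ^ 2 + a) ^ 2 ^ m * (a ^ 2 + a) := by grind
  rw [ha]
  simp only [add_pow_char_pow, mul_pow, hinv]
  ring

theorem quadPowMap_add_eq_iff {δ x a : F} (ha : a ≠ 0) :
    quadPowMap m δ (x + a) = quadPowMap m δ x ↔
      a ^ 2 ^ m = a ∧ (a + 1) ^ 3 + (a + 1) ^ 2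
        + ((x ^ 2 + x + δ) ^ 2 ^ m + (x ^ 2 + x + δ)) * (a + 1) + 1 = 0 := by
  constructor
  · intro h
    have haq := pow_eq_self_of_quadPowMap_add_eq hinv h
    have hsum := quadPowMap_add_add_of_pow_eq (δ := δ) (x := x) haq
    rw [h, CharTwo.add_self_eq_zero] at hsum
    exact ⟨haq, (mul_eq_zero.mp hsum.symm).resolve_left ha⟩
  · rintro ⟨haq, hcubic⟩
    have hsum := quadPowMap_add_add_of_pow_eq (δ := δ) (x := x) haq
    rw [hcubic, mul_zero] at hsum
    exact CharTwo.add_eq_zero.mp hsum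

theorem existsUnique_quadPowMap_add_eq [Finite F] (hm : Even m) {δ : F}
    (hδ : absTrace m (δ ^ 2 ^ m + δ) = 1) (x : F) :
    ∃! a : F, a ≠ 0 ∧ quadPowMap m δ (x + a) = quadPowMap m δ x := by
  set V := (x ^ 2 + x + δ) ^ 2 ^ m + (x ^ 2 + x + δ) with hV_def
  have hVq : V ^ 2 ^ m = V := by rw [add_pow_char_pow, hinv, add_comm]
  have hV : absTrace m V = 1 := by
    have hr : (x ^ 2 ^ m + x) ^ 2 ^ m = x ^ 2 ^ m + x := by rw [add_pow_char_pow, hinv, add_comm]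
    have hV_eq : V = ((x ^ 2 ^ m + x) ^ 2 + (x ^ 2 ^ m + x)) + (δ ^ 2 ^ m + δ) := by
      rw [hV_def, add_pow_char_pow, add_pow_char_pow, pow_right_comm]
      grind
    rw [hV_eq, absTrace_add, absTrace_sq_add_self_of_pow_eq hr, zero_add, hδ]
  have hV1 : V ≠ 1 := by
    rintro hV1
    rw [hV1, absTrace_one, (CharP.cast_eq_zero_iff F 2 m).mpr (even_iff_two_dvd.mp hm)] at hV
    exact zero_ne_one hV
  obtain ⟨b, ⟨hbq, hb⟩, huniq⟩ := existsUnique_cubic_root hVq hV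
  have hb1 : b + 1 ≠ 0 := fun h => hV1 (by grind)
  have hbb : b + 1 + 1 = b := by grind
  refine ⟨b + 1, ⟨hb1, (quadPowMap_add_eq_iff hinv hb1).mpr ⟨?_, by rw [hbb]; exact hb⟩⟩, ?_⟩
  · rw [add_pow_char_pow, one_pow, hbq]
  · rintro a ⟨ha, hfa⟩
    obtain ⟨haq, hcubic⟩ := (quadPowMap_add_eq_iff hinv ha).mp hfa
    have := huniq (a + 1) ⟨by rw [add_pow_char_pow, one_pow, haq], hcubic⟩
    grind

end TwoToOne

theorem card_filter_eq_two_or_zero {α β : Type*} [AddGroup α] [Fintype α] [DecidableEq α]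
    [DecidableEq β] (g : α → β) (hg : ∀ x, ∃! a, a ≠ 0 ∧ g (x + a) = g x) (b : β) :
    #{x | g x = b} = 2 ∨ #{x | g x = b} = 0 := by
  rcases (univ.filter fun x => g x = b).eq_empty_or_nonempty with hempty | ⟨x, hx⟩
  · exact Or.inr (by rw [hempty, card_empty])
  left
  rw [mem_filter] at hx
  obtain ⟨a, ⟨ha, hxa⟩, huniq⟩ := hg x
  refine card_eq_two.mpr ⟨x, x + a, by simpa using ha, ?_⟩
  ext y
  simp only [mem_filter, mem_univ, true_and, mem_insert, mem_singleton]
  constructor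
  · intro hy
    refine or_iff_not_imp_left.mpr fun hyx => ?_
    have hdiff := huniq (-x + y)
      ⟨fun h => hyx (neg_add_eq_zero.mp h).symm, by rw [add_neg_cancel_left, hy, hx.2]⟩
    rw [← hdiff, add_neg_cancel_left]
  · rintro (rfl | rfl)
    · exact hx.2
    · rw [hxa, hx.2]

theorem stmt10_general {F : Type*} [Field F] [Fintype F] [DecidableEq F] (m : ℕ)
    (hmeven : Even m)
    (hcard : Fintype.card F = 2 ^ (2 * m))
    (δ : F) (htr : ∑ i ∈ Finset.range (2 * m), δ ^ (2 ^ i) = 1)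
    (f : F → F)
    (hf : ∀ x, f x = (x ^ 2 + x + δ) ^ (2 ^ m + 1) + x) :
    ∀ b : F, (Finset.univ.filter (fun x : F => f x = b)).card = 2 ∨
             (Finset.univ.filter (fun x : F => f x = b)).card = 0 := by
  have : CharP F 2 := charP_of_card_eq_prime_pow hcard
  have hinv : ∀ u : F, (u ^ 2 ^ m) ^ 2 ^ m = u := fun u => by
    rw [← pow_mul, ← pow_add, ← two_mul, ← hcard, FiniteField.pow_card]
  have hδ : absTrace m (δ ^ 2 ^ m + δ) = 1 := by rw [← absTrace_two_mul]; exact htr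
  obtain rfl : f = quadPowMap m δ := funext hf
  exact card_filter_eq_two_or_zero _ (existsUnique_quadPowMap_add_eq hinv hmeven hδ)

/-- For even `m` and `Tr_{2m}(δ) = 1`, `f(x) = (x²+x+δ)^{2^m+1} + x` is 2-to-1 on
`F_{2^{2m}}`. -/
theorem stmt10 {F : Type*} [Field F] [Fintype F] [DecidableEq F] (m : ℕ)
    (hm : 0 < m) (hmeven : Even m)
    (hcard : Fintype.card F = 2 ^ (2 * m))
    (δ : F) (htr : ∑ i ∈ Finset.range (2 * m), δ ^ (2 ^ i) = 1)
    (f : F → F)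
    (hf : ∀ x, f x = (x ^ 2 + x + δ) ^ (2 ^ m + 1) + x) :
    ∀ b : F, (Finset.univ.filter (fun x : F => f x = b)).card = 2 ∨
             (Finset.univ.filter (fun x : F => f x = b)).card = 0 :=
  stmt10_general m hmeven hcard δ htr f hf
end

section
/- Let m ∈ ℕ be even and δ ∈ F_{2^{2m}} with Tr_{2m}(δ) = 1. Then f(x) = (x² + x + δ)^{2^{2m-1} + 2^{m-1}} + x is a 2-to-1 mapping on F_{2^{2m}}. -/
/-!
Let `q = 2^m` and let `K = 𝔽_q` be the subfield of `F` fixed by `w ↦ w^q`. The exponent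
`e = 2^(2m-1) + 2^(m-1)` satisfies `2e = q² + q`, so `w^e` is the square root of the norm
`w^(q+1)` and lies in `K`. Hence `f y = f x` forces `c = x + y ∈ K`, and for `c ∈ K` squaring
turns `f (x + c) = f x` into `c (c³ + t c + t) = 0`, where `t = z + z^q` for `z = x² + x + δ`
has `Tr_m t = Tr_{2m} δ = 1`.

So it suffices that, for even `m`, a cubic `X³ + tX + t` with `t ∈ K` and `Tr_m t = 1` has
exactly one root in `K`. A root `c ≠ 1` determines `t = c³/(c + 1) = u⁻² + u⁻¹ + 1 + u` with
`u = (c + 1)⁻¹`, and this parametrisation preserves `Tr_m`, since `Tr_m (v² + v) = 0` on `K` and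
`Tr_m 1 = 0` for even `m`. Two distinct roots `c, c'` give `u = (c + c' + 1)⁻¹ = w² + w` with
`w = c/(c + c') ∈ K`, so `Tr_m t = Tr_m u = 0`. Hence the parametrisation is injective on the
finite set `{u ∈ K | Tr_m u = 1}` and maps it into itself, so it is onto: a root exists.
-/

open Finset

section

variable {F : Type*} [Field F]

lemma pow_two_pow_pow_two_pow {m : ℕ} (hQ : ∀ w : F, w ^ 2 ^ (2 * m) = w) (w : F) :
    (w ^ 2 ^ m) ^ 2 ^ m = w := by
  rw [← pow_mul, ← pow_add, ← two_mul, hQ]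

lemma sq_pow_eq_mul_pow {m : ℕ} (hQ : ∀ w : F, w ^ 2 ^ (2 * m) = w) (hm : 0 < m) (w : F) :
    (w ^ (2 ^ (2 * m - 1) + 2 ^ (m - 1))) ^ 2 = w * w ^ 2 ^ m := by
  have hexp : (2 ^ (2 * m - 1) + 2 ^ (m - 1)) * 2 = 2 ^ (2 * m) + 2 ^ m := by
    rw [add_mul, ← pow_succ, ← pow_succ, Nat.sub_add_cancel (by omega),
      Nat.sub_add_cancel hm]
  rw [← pow_mul, hexp, pow_add, hQ]

def frobTrace (n : ℕ) (u : F) : F := ∑ i ∈ range n, u ^ 2 ^ i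

lemma frobTrace_zero (n : ℕ) : frobTrace n (0 : F) = 0 :=
  sum_eq_zero fun i _ => zero_pow (pow_ne_zero i two_ne_zero)

variable [CharP F 2]

def fixedSubfield (n : ℕ) : Subfield F := (iterateFrobenius F 2 n).eqLocusField (RingHom.id F)

lemma mem_fixedSubfield {n : ℕ} {u : F} : u ∈ fixedSubfield n ↔ u ^ 2 ^ n = u := Iff.rfl

lemma frobTrace_add (n : ℕ) (a b : F) : frobTrace n (a + b) = frobTrace n a + frobTrace n b := by
  simp only [frobTrace, add_pow_char_pow, sum_add_distrib]

lemma frobTrace_one_of_even {n : ℕ} (hn : Even n) : frobTrace n (1 : F) = 0 := by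
  simp only [frobTrace, one_pow, sum_const, card_range, nsmul_eq_mul, mul_one]
  rw [CharTwo.natCast_eq_ite, if_pos hn]

lemma frobTrace_sq {n : ℕ} {u : F} (hu : u ∈ fixedSubfield n) :
    frobTrace n (u ^ 2) = frobTrace n u := by
  have h := sum_range_succ' (fun i => u ^ 2 ^ i) n
  rw [sum_range_succ, mem_fixedSubfield.mp hu, pow_zero, pow_one] at h
  simp only [frobTrace, ← pow_mul, ← pow_succ']
  exact add_right_cancel h.symm

lemma frobTrace_sq_add_self {n : ℕ} {u : F} (hu : u ∈ fixedSubfield n) :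
    frobTrace n (u ^ 2 + u) = 0 := by
  rw [frobTrace_add, frobTrace_sq hu, CharTwo.add_self_eq_zero]

def relTrace (n : ℕ) (u : F) : F := u + u ^ 2 ^ n

lemma frobTrace_two_mul (n : ℕ) (u : F) : frobTrace (2 * n) u = frobTrace n (relTrace n u) := by
  simp only [frobTrace, relTrace, two_mul, sum_range_add, add_pow_char_pow, sum_add_distrib,
    ← pow_mul, ← pow_add]

def cubicParam (u : F) : F := u⁻¹ ^ 2 + u⁻¹ + 1 + u

lemma cubicParam_mem {n : ℕ} {u : F} (hu : u ∈ fixedSubfield n) :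
    cubicParam u ∈ fixedSubfield n :=
  add_mem (add_mem (add_mem (pow_mem (inv_mem hu) 2) (inv_mem hu)) (one_mem _)) hu

lemma frobTrace_cubicParam {n : ℕ} (hn : Even n) {u : F} (hu : u ∈ fixedSubfield n) :
    frobTrace n (cubicParam u) = frobTrace n u := by
  rw [cubicParam, frobTrace_add, frobTrace_add, frobTrace_sq_add_self (inv_mem hu),
    frobTrace_one_of_even hn, zero_add, zero_add]

lemma cubicParam_root {u : F} (hu : u ≠ 0) :
    (u⁻¹ + 1) ^ 3 + cubicParam u * (u⁻¹ + 1) + cubicParam u = 0 := by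
  unfold cubicParam
  field_simp
  linear_combination (u ^ 4 + 2 * u ^ 3 + 3 * u ^ 2 + 3 * u + 1) * CharTwo.two_eq_zero (R := F)

theorem cubic_root_unique_s11 {n : ℕ} (hn : Even n) {t c c' : F} (ht : frobTrace n t = 1)
    (hcK : c ∈ fixedSubfield n) (hc'K : c' ∈ fixedSubfield n)
    (hc : c ^ 3 + t * c + t = 0) (hc' : c' ^ 3 + t * c' + t = 0) : c = c' := by
  by_contra hne
  have h2 : (2 : F) = 0 := CharTwo.two_eq_zero
  have hs : c + c' ≠ 0 := fun h => hne (CharTwo.add_eq_zero.mp h)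
  have ht_eq : t = (c + c') ^ 2 + c * c' := mul_left_cancel₀ hs <| by
    linear_combination hc + hc' - (2 * c * c' ^ 2 + 2 * c ^ 2 * c' + c ^ 3 + c' ^ 3 + t) * h2
  have hprod : c * c' * (c + c' + 1) = (c + c') ^ 2 := by
    linear_combination
      hc - (c + 1) * ht_eq - (2 * c * c' + c ^ 2 + c ^ 2 * c' + c ^ 3 + c' ^ 2) * h2
  have hs1 : c + c' + 1 ≠ 0 := fun h => hs <| by
    rwa [h, mul_zero, eq_comm, pow_eq_zero_iff two_ne_zero] at hprod
  have hw : (c + c' + 1)⁻¹ = (c / (c + c')) ^ 2 + c / (c + c') := by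
    field_simp
    linear_combination hprod + (c * c' - c * c' ^ 2 - 2 * c ^ 2 * c' - c ^ 3 + c' ^ 2) * h2
  have ht' : t = cubicParam (c + c' + 1)⁻¹ := by
    rw [cubicParam, inv_inv]
    field_simp
    linear_combination (c + c' + 1) * ht_eq + hprod -
      (2 + 3 * c + 2 * c * c' + c ^ 2 + 3 * c' + c' ^ 2) * h2
  have hsK : c + c' ∈ fixedSubfield n := add_mem hcK hc'K
  have htr := frobTrace_cubicParam hn (inv_mem (add_mem hsK (one_mem _)))
  rw [← ht', ht, hw, frobTrace_sq_add_self (div_mem hcK hsK)] at htr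
  exact one_ne_zero htr

theorem exists_cubic_root_s11 [Finite F] {n : ℕ} (hn : Even n) {t : F} (htK : t ∈ fixedSubfield n)
    (ht : frobTrace n t = 1) : ∃ c ∈ fixedSubfield n, c ^ 3 + t * c + t = 0 := by
  set T : Set F := {u | u ∈ fixedSubfield n ∧ frobTrace n u = 1}
  have hT0 : ∀ u ∈ T, u ≠ 0 := by
    rintro u ⟨-, hu⟩ rfl
    exact zero_ne_one ((frobTrace_zero n).symm.trans hu)
  have hmaps : Set.MapsTo cubicParam T T := fun u hu =>
    ⟨cubicParam_mem hu.1, (frobTrace_cubicParam hn hu.1).trans hu.2⟩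
  have hinj : Set.InjOn cubicParam T := by
    intro u hu u' hu' h
    have hroot' := cubicParam_root (hT0 u' hu')
    rw [← h] at hroot'
    simpa using cubic_root_unique_s11 hn (hmaps hu).2 (add_mem (inv_mem hu.1) (one_mem _))
      (add_mem (inv_mem hu'.1) (one_mem _)) (cubicParam_root (hT0 u hu)) hroot'
  obtain ⟨u, hu, rfl⟩ :=
    (((Set.toFinite T).injOn_iff_bijOn_of_mapsTo hmaps).mp hinj).surjOn ⟨htK, ht⟩
  exact ⟨u⁻¹ + 1, add_mem (inv_mem hu.1) (one_mem _), cubicParam_root (hT0 u hu)⟩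

section Norm

variable {m : ℕ} (hQ : ∀ w : F, w ^ 2 ^ (2 * m) = w)
include hQ

lemma relTrace_mem (w : F) : relTrace m w ∈ fixedSubfield m := by
  rw [mem_fixedSubfield, relTrace, add_pow_char_pow, pow_two_pow_pow_two_pow hQ, add_comm]

lemma pow_mem_fixedSubfield (hm : 0 < m) (w : F) :
    w ^ (2 ^ (2 * m - 1) + 2 ^ (m - 1)) ∈ fixedSubfield m := by
  rw [mem_fixedSubfield, ← CharTwo.sq_inj, pow_right_comm, sq_pow_eq_mul_pow hQ hm, mul_pow,
    pow_two_pow_pow_two_pow hQ, mul_comm]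

lemma add_sq_add_self_pow_eq_iff (hm : 0 < m) (z : F) {c : F} (hc : c ∈ fixedSubfield m) :
    (z + (c ^ 2 + c)) ^ (2 ^ (2 * m - 1) + 2 ^ (m - 1)) =
        z ^ (2 ^ (2 * m - 1) + 2 ^ (m - 1)) + c ↔
      c * (c ^ 3 + relTrace m z * c + relTrace m z) = 0 := by
  have ha : (c ^ 2 + c) ^ 2 ^ m = c ^ 2 + c := add_mem (pow_mem hc 2) hc
  rw [← CharTwo.sq_inj, CharTwo.add_sq _ c, sq_pow_eq_mul_pow hQ hm, sq_pow_eq_mul_pow hQ hm,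
    add_pow_char_pow, ha, relTrace]
  constructor <;> intro h
  · linear_combination h - c ^ 3 * CharTwo.two_eq_zero (R := F)
  · linear_combination h + c ^ 3 * CharTwo.two_eq_zero (R := F)

lemma frobTrace_relTrace_sq_add_self_add (x δ : F) :
    frobTrace m (relTrace m (x ^ 2 + x + δ)) = frobTrace (2 * m) δ := by
  have hsplit : relTrace m (x ^ 2 + x + δ) = relTrace m x ^ 2 + relTrace m x + relTrace m δ := by
    simp only [relTrace, add_pow_char_pow, pow_right_comm x 2]
    linear_combination -(x * x ^ 2 ^ m) * CharTwo.two_eq_zero (R := F)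
  rw [hsplit, frobTrace_add, frobTrace_sq_add_self (relTrace_mem hQ x), zero_add,
    frobTrace_two_mul]

end Norm

section Fiber

variable {m : ℕ} (hm : 0 < m) (hQ : ∀ w : F, w ^ 2 ^ (2 * m) = w) {δ : F} {f : F → F}
  (hf : ∀ x, f x = (x ^ 2 + x + δ) ^ (2 ^ (2 * m - 1) + 2 ^ (m - 1)) + x)
include hm hQ hf

lemma add_mem_fixedSubfield_of_map_eq {x y : F} (h : f y = f x) : y + x ∈ fixedSubfield m := by
  have hK := add_mem (pow_mem_fixedSubfield hQ hm (x ^ 2 + x + δ))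
    (pow_mem_fixedSubfield hQ hm (y ^ 2 + y + δ))
  rw [hf, hf] at h
  convert hK using 1
  grind

lemma map_add_eq_iff (x : F) {c : F} (hc : c ∈ fixedSubfield m) :
    f (x + c) = f x ↔
      c * (c ^ 3 + relTrace m (x ^ 2 + x + δ) * c + relTrace m (x ^ 2 + x + δ)) = 0 := by
  have hz : (x + c) ^ 2 + (x + c) + δ = x ^ 2 + x + δ + (c ^ 2 + c) := by
    linear_combination x * c * CharTwo.two_eq_zero (R := F)
  rw [← add_sq_add_self_pow_eq_iff hQ hm _ hc, hf, hf, hz, ← add_assoc, add_right_comm _ x c,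
    add_left_inj, CharTwo.add_eq_iff_eq_add]

lemma card_filter_map_eq_eq_two [Fintype F] [DecidableEq F] (hn : Even m)
    (hδ : frobTrace (2 * m) δ = 1) (x : F) : (univ.filter fun y => f y = f x).card = 2 := by
  have ht : frobTrace m (relTrace m (x ^ 2 + x + δ)) = 1 :=
    (frobTrace_relTrace_sq_add_self_add hQ x δ).trans hδ
  obtain ⟨c, hcK, hc⟩ := exists_cubic_root_s11 hn (relTrace_mem hQ _) ht
  have hc0 : c ≠ 0 := by
    rintro rfl
    rw [zero_pow three_ne_zero, mul_zero, zero_add, zero_add] at hc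
    rw [hc, frobTrace_zero] at ht
    exact zero_ne_one ht
  have hfiber : univ.filter (fun y => f y = f x) = {x, x + c} := by
    ext y
    simp only [mem_filter, mem_univ, true_and, mem_insert, mem_singleton]
    constructor
    · intro hy
      have hyK := add_mem_fixedSubfield_of_map_eq hm hQ hf hy
      have hy' : y = x + (y + x) := by rw [add_comm y, CharTwo.add_cancel_left]
      rw [hy', map_add_eq_iff hm hQ hf x hyK, mul_eq_zero] at hy
      rcases hy with hyx | hroot
      · exact Or.inl (CharTwo.add_eq_zero.mp hyx)
      · exact Or.inr (hy'.trans (congrArg (x + ·) (cubic_root_unique_s11 hn ht hyK hcK hroot hc)))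
    · rintro (rfl | rfl)
      · rfl
      · exact (map_add_eq_iff hm hQ hf x hcK).mpr (by rw [hc, mul_zero])
  rw [hfiber, card_pair]
  simpa using hc0

end Fiber

end

/-- For even `m` and `Tr_{2m}(δ) = 1`, `f(x) = (x²+x+δ)^{2^{2m-1}+2^{m-1}} + x` is 2-to-1
on `F_{2^{2m}}`. -/
theorem stmt11 {F : Type*} [Field F] [Fintype F] [DecidableEq F] (m : ℕ)
    (hm : 0 < m) (hmeven : Even m)
    (hcard : Fintype.card F = 2 ^ (2 * m))
    (δ : F) (htr : ∑ i ∈ Finset.range (2 * m), δ ^ (2 ^ i) = 1)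
    (f : F → F)
    (hf : ∀ x, f x = (x ^ 2 + x + δ) ^ (2 ^ (2 * m - 1) + 2 ^ (m - 1)) + x) :
    ∀ b : F, (Finset.univ.filter (fun x : F => f x = b)).card = 2 ∨
             (Finset.univ.filter (fun x : F => f x = b)).card = 0 := by
  have : CharP F 2 := charP_of_card_eq_prime_pow hcard
  have hQ : ∀ w : F, w ^ 2 ^ (2 * m) = w := fun w => hcard ▸ FiniteField.pow_card w
  intro b
  by_cases hb : ∃ x, f x = b
  · obtain ⟨x, rfl⟩ := hb
    exact Or.inl (card_filter_map_eq_eq_two hm hQ hf hmeven htr x)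
  · exact Or.inr (card_eq_zero.mpr (filter_eq_empty_iff.mpr fun y _ hy => hb ⟨y, hy⟩))
end

section
/- Let m ∈ ℕ be even and δ ∈ F_{2^{2m}} with Tr_{2m}(δ) = 1. Then f(x) = (x² + x + δ)^{(2^{2m} + 2^m + 1)/3} + x is a 2-to-1 mapping on F_{2^{2m}}. -/
open Finset

private lemma stmt15_pow_mod3 (m : ℕ) (hm : Even m) : ∃ s, 2 ^ m = 3 * s + 1 := by
  obtain ⟨k, rfl⟩ := hm
  induction k with
  | zero => exact ⟨0, rfl⟩
  | succ k ih =>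
      obtain ⟨s, hs⟩ := ih
      refine ⟨4 * s + 1, ?_⟩
      have h : k + 1 + (k + 1) = (k + k) + 2 := by ring
      rw [h, pow_add, hs]
      ring

private lemma stmt15_E3 (m : ℕ) (hm : Even m) :
    3 * ((2 ^ (2 * m) + 2 ^ m + 1) / 3) = 2 ^ (2 * m) + 2 ^ m + 1 := by
  obtain ⟨s, hs⟩ := stmt15_pow_mod3 m hm
  have h2m : 2 ^ (2 * m) = (2 ^ m) * (2 ^ m) := by
    rw [two_mul, pow_add]
  refine Nat.mul_div_cancel' ⟨3 * s * s + 3 * s + 1, ?_⟩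
  rw [h2m, hs]; ring

private lemma stmt15_keydvd (m : ℕ) (hm : Even m) (hm2 : 2 ≤ m) :
    ∃ K, ((2 ^ (2 * m) + 2 ^ m + 1) / 3) * (2 ^ m - 2) + 1 = (2 ^ (2 * m) - 1) * K := by
  obtain ⟨s, hs⟩ := stmt15_pow_mod3 m hm
  set E := (2 ^ (2 * m) + 2 ^ m + 1) / 3 with hE
  have h3E : 3 * E = 2 ^ (2 * m) + 2 ^ m + 1 := stmt15_E3 m hm
  have hq4 : 4 ≤ 2 ^ m := by
    calc 4 = 2 ^ 2 := rfl
    _ ≤ 2 ^ m := Nat.pow_le_pow_right (by norm_num) hm2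
  obtain ⟨d, hd⟩ : ∃ d, 2 ^ m = d + 2 := ⟨2 ^ m - 2, by omega⟩
  have h2m : 2 ^ (2 * m) = (2 ^ m) * (2 ^ m) := by rw [two_mul, pow_add]
  refine ⟨s, ?_⟩
  have hd2 : 2 ^ m - 2 = d := by omega
  rw [hd2]
  have hqq : 2 ^ (2 * m) = d * d + 4 * d + 4 := by rw [h2m, hd]; ring
  have hsub : 2 ^ (2 * m) - 1 = d * d + 4 * d + 3 := by omega
  rw [hsub]
  have key : 3 * (E * d + 1) = 3 * ((d * d + 4 * d + 3) * s) := by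
    have hds : 3 * s = d + 1 := by omega
    calc 3 * (E * d + 1) = (3 * E) * d + 3 := by ring
    _ = (d * d + 5 * d + 7) * d + 3 := by
        rw [h3E, hqq, hd]; ring
    _ = (d * d + 4 * d + 3) * (d + 1) := by ring
    _ = (d * d + 4 * d + 3) * (3 * s) := by rw [hds]
    _ = 3 * ((d * d + 4 * d + 3) * s) := by ring
  exact Nat.eq_of_mul_eq_mul_left (by norm_num) key

private lemma stmt15_tele {F : Type*} [Field F] [CharP F 2] (n : ℕ) (z : F) :
    ∑ i ∈ Finset.range n, (z ^ 2 + z) ^ (2 ^ i) = z ^ (2 ^ n) + z := by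
  have h2 : (2 : F) = 0 := CharTwo.two_eq_zero
  induction n with
  | zero =>
      simp only [Finset.range_zero, Finset.sum_empty, pow_zero, pow_one]
      linear_combination (-z) * h2
  | succ n ih =>
      rw [Finset.sum_range_succ, ih, add_pow_char_pow (z ^ 2) z 2 n]
      have e1 : (z ^ 2) ^ (2 ^ n) = z ^ (2 ^ (n + 1)) := by
        rw [← pow_mul]
        congr 1
        rw [pow_succ]
        ring
      rw [e1]
      linear_combination (z ^ (2 ^ n)) * h2

/-- For even `m` and `Tr_{2m}(δ) = 1`, `f(x) = (x²+x+δ)^{(2^{2m}+2^m+1)/3} + x` is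
2-to-1 on `F_{2^{2m}}`. -/
theorem stmt15 {F : Type*} [Field F] [Fintype F] [DecidableEq F] (m : ℕ)
    (hm : 0 < m) (hmeven : Even m)
    (hcard : Fintype.card F = 2 ^ (2 * m))
    (δ : F) (htr : ∑ i ∈ Finset.range (2 * m), δ ^ (2 ^ i) = 1)
    (f : F → F)
    (hf : ∀ x, f x = (x ^ 2 + x + δ) ^ ((2 ^ (2 * m) + 2 ^ m + 1) / 3) + x) :
    ∀ b : F, (Finset.univ.filter (fun x : F => f x = b)).card = 2 ∨
             (Finset.univ.filter (fun x : F => f x = b)).card = 0 := by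
  classical
  obtain ⟨p, hp⟩ := CharP.exists F
  haveI := hp
  obtain ⟨n, hpp, hcard2⟩ := FiniteField.card F p
  have hp2 : p = 2 := by
    rw [hcard] at hcard2
    have h1 : p ∣ 2 ^ (2 * m) := by
      rw [hcard2]; exact dvd_pow_self p n.pos.ne'
    have h2 : p ∣ 2 := hpp.dvd_of_dvd_pow h1
    exact (Nat.prime_dvd_prime_iff_eq hpp Nat.prime_two).mp h2
  subst hp2
  haveI : CharP F 2 := hp
  have h2 : (2 : F) = 0 := CharTwo.two_eq_zero
  have hm2 : 2 ≤ m := by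
    rcases hmeven with ⟨k, hk⟩; omega
  set E := (2 ^ (2 * m) + 2 ^ m + 1) / 3 with hE
  set q := 2 ^ m with hq
  have hq4 : (4 : ℕ) ≤ q := by
    rw [hq]
    calc (4:ℕ) = 2 ^ 2 := rfl
    _ ≤ 2 ^ m := Nat.pow_le_pow_right (by norm_num) hm2
  have hqq : q * q = 2 ^ (2 * m) := by rw [hq, two_mul, pow_add]
  have hP1 : ∀ t : F, t ^ (2 ^ (2 * m)) = t := by
    intro t; rw [← hcard]; exact FiniteField.pow_card t
  have hFrq : ∀ a b : F, (a + b) ^ q = a ^ q + b ^ q := by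
    intro a b; exact add_pow_char_pow a b 2 m
  have hQQ : ∀ t : F, (t ^ q) ^ q = t := by
    intro t; rw [← pow_mul, hqq]; exact hP1 t
  have hpow1 : ∀ t : F, t ≠ 0 → t ^ (E * (q - 2) + 1) = 1 := by
    intro t ht
    obtain ⟨K, hK⟩ := stmt15_keydvd m hmeven hm2
    rw [← hE, ← hq] at hK
    rw [hK, pow_mul]
    have hone : t ^ (2 ^ (2 * m) - 1) = 1 := by
      rw [← hcard]; exact FiniteField.pow_card_sub_one_eq_one t ht
    rw [hone, one_pow]
  have hEq2 : E * q + 1 = E * 2 + (E * (q - 2) + 1) := by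
    have h : q - 2 + 2 = q := Nat.sub_add_cancel (le_trans (by norm_num) hq4)
    calc E * q + 1 = E * (q - 2 + 2) + 1 := by rw [h]
    _ = E * 2 + (E * (q - 2) + 1) := by ring
  have hI1 : ∀ t : F, t ≠ 0 → (t ^ E) ^ q * t = (t ^ E) ^ 2 := by
    intro t ht
    rw [← pow_mul, ← pow_succ, ← pow_mul]
    calc t ^ (E * q + 1) = t ^ (E * 2) * t ^ (E * (q - 2) + 1) := by
          rw [← pow_add, hEq2]
    _ = t ^ (E * 2) := by rw [hpow1 t ht, mul_one]
  have hI2 : ∀ t : F, t ≠ 0 → ∀ v : F, v * t ^ q = t ^ 2 → v ^ E = t := by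
    intro t ht v hv
    have h1 : v ^ E * (t ^ q) ^ E = (t ^ 2) ^ E := by
      rw [← mul_pow, hv]
    have h2' : t * (t ^ q) ^ E = (t ^ 2) ^ E := by
      rw [← pow_mul, ← pow_mul]
      calc t * t ^ (q * E) = t ^ (E * q + 1) := by
            rw [pow_succ, mul_comm E q]; ring
      _ = t ^ (E * 2) * t ^ (E * (q - 2) + 1) := by rw [← pow_add, hEq2]
      _ = t ^ (2 * E) := by rw [hpow1 t ht, mul_one, mul_comm E 2]
    have hne : (t ^ q) ^ E ≠ 0 := pow_ne_zero _ (pow_ne_zero _ ht)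
    exact mul_right_cancel₀ hne (h1.trans h2'.symm)
  have hL1 : ∀ z : F, ∑ i ∈ Finset.range (2 * m), (z ^ 2 + z) ^ (2 ^ i) = 0 := by
    intro z
    rw [stmt15_tele (2 * m) z, hP1 z]
    linear_combination z * h2
  have htrv : ∀ y : F, ∑ i ∈ Finset.range (2 * m), (y ^ 2 + y + δ) ^ (2 ^ i) = 1 := by
    intro y
    have hterm : ∀ i ∈ Finset.range (2 * m),
        (y ^ 2 + y + δ) ^ (2 ^ i) = (y ^ 2 + y) ^ (2 ^ i) + δ ^ (2 ^ i) := by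
      intro i _; exact add_pow_char_pow (y ^ 2 + y) δ 2 i
    rw [Finset.sum_congr rfl hterm, Finset.sum_add_distrib, hL1, htr, zero_add]
  have hne0 : ∀ v : F, (∑ i ∈ Finset.range (2 * m), v ^ (2 ^ i) = 1) → v ≠ 0 := by
    intro v hv h0
    rw [h0] at hv
    have hz : ∀ i ∈ Finset.range (2 * m), (0 : F) ^ (2 ^ i) = 0 := by
      intro i _; exact zero_pow (pow_ne_zero i two_ne_zero)
    rw [Finset.sum_congr rfl hz, Finset.sum_const, smul_zero] at hv
    exact one_ne_zero hv.symm
  have hfix : ∀ v : F, v ^ q = v → ∑ i ∈ Finset.range (2 * m), v ^ (2 ^ i) = 0 := by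
    intro v hv
    have hsplit : ∑ i ∈ Finset.range (2 * m), v ^ (2 ^ i)
        = ∑ i ∈ Finset.range m, v ^ (2 ^ i) + ∑ i ∈ Finset.range m, v ^ (2 ^ (m + i)) := by
      rw [two_mul, Finset.sum_range_add]
    have heach : ∀ i ∈ Finset.range m, v ^ (2 ^ (m + i)) = v ^ (2 ^ i) := by
      intro i _
      rw [pow_add, pow_mul, ← hq, hv]
    rw [hsplit, Finset.sum_congr rfl heach]
    linear_combination (∑ i ∈ Finset.range m, v ^ (2 ^ i)) * h2
  intro b0
  by_cases hex : ∃ x, f x = b0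
  · left
    obtain ⟨x, hx⟩ := hex
    obtain ⟨u, hu⟩ : ∃ u : F, u = x ^ 2 + x + δ := ⟨_, rfl⟩
    have hu1 : ∑ i ∈ Finset.range (2 * m), u ^ (2 ^ i) = 1 := by rw [hu]; exact htrv x
    have hu0 : u ≠ 0 := hne0 u hu1
    obtain ⟨w, hw⟩ : ∃ w : F, w = u ^ E := ⟨_, rfl⟩
    have hw0 : w ≠ 0 := by rw [hw]; exact pow_ne_zero _ hu0
    have K1 : w ^ q * u = w ^ 2 := by rw [hw]; exact hI1 u hu0
    have K2 : u ^ q * u ^ 2 = w ^ 3 := by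
      have h1 : (w ^ q * u) ^ q = (w ^ 2) ^ q := by rw [K1]
      have h2' : w * u ^ q = (w ^ q) ^ 2 := by
        rw [mul_pow] at h1
        calc w * u ^ q = (w ^ q) ^ q * u ^ q := by rw [hQQ w]
        _ = (w ^ 2) ^ q := h1
        _ = (w ^ q) ^ 2 := by rw [← pow_mul, ← pow_mul, mul_comm 2 q]
      have h3 : w * (u ^ q * u ^ 2) = w * w ^ 3 := by
        calc w * (u ^ q * u ^ 2) = (w * u ^ q) * u ^ 2 := by ring
        _ = (w ^ q) ^ 2 * u ^ 2 := by rw [h2']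
        _ = (w ^ q * u) ^ 2 := by ring
        _ = (w ^ 2) ^ 2 := by rw [K1]
        _ = w * w ^ 3 := by ring
      exact mul_left_cancel₀ hw0 h3
    obtain ⟨c, hc⟩ : ∃ c : F, c = u + w + w ^ 2 := ⟨_, rfl⟩
    have hcq : c ^ q = u ^ q + w ^ q + (w ^ q) ^ 2 := by
      have e1 : (w ^ 2) ^ q = (w ^ q) ^ 2 := by
        rw [← pow_mul, ← pow_mul, mul_comm 2 q]
      rw [hc, hFrq, hFrq, e1]
    have K3 : c ^ q * u ^ 2 = c * w ^ 2 := by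
      rw [hcq, hc]
      linear_combination K2 + u * K1 + (w ^ q * u + w ^ 2) * K1
    have hu_ne_w : u ≠ w := by
      intro huw
      have h1 : u ^ q * u = u ^ 2 := by rw [← huw] at K1; exact K1
      have h2' : u ^ q = u := mul_right_cancel₀ hu0 (h1.trans (by ring))
      have h3 := hfix u h2'
      rw [hu1] at h3
      exact one_ne_zero h3
    have hc0 : c ≠ 0 := by
      intro hcz
      have huw : u = w ^ 2 + w := by
        rw [hc] at hcz
        linear_combination hcz - w * h2 - w ^ 2 * h2
      have h3 : ∑ i ∈ Finset.range (2 * m), u ^ (2 ^ i) = 0 := by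
        rw [huw]; exact hL1 w
      rw [hu1] at h3
      exact one_ne_zero h3
    have K4 : c ^ q * u = c * w ^ q := by
      refine mul_right_cancel₀ hu0 ?_
      calc (c ^ q * u) * u = c ^ q * u ^ 2 := by ring
      _ = c * w ^ 2 := K3
      _ = c * (w ^ q * u) := by rw [K1]
      _ = (c * w ^ q) * u := by ring
    obtain ⟨b', hb'⟩ : ∃ b' : F, b' = c / w := ⟨_, rfl⟩
    have hb'w : b' * w = c := by rw [hb']; exact div_mul_cancel₀ c hw0
    have hb'0 : b' ≠ 0 := by
      intro h0
      rw [h0, zero_mul] at hb'w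
      exact hc0 hb'w.symm
    obtain ⟨y', hy'⟩ : ∃ y' : F, y' = x + w + b' := ⟨_, rfl⟩
    have hwx : f x = w + x := by rw [hf x, ← hu, ← hw]
    have hxy' : x ≠ y' := by
      intro hxe
      apply hu_ne_w
      have h1 : w + b' = 0 := by
        rw [hy'] at hxe
        linear_combination -hxe
      have h3 : c = w ^ 2 := by
        have h4 : b' = w := by linear_combination h1 - w * h2
        rw [← hb'w, h4]; ring
      rw [hc] at h3
      linear_combination h3 - w * h2
    have hset : Finset.univ.filter (fun z : F => f z = b0) = {x, y'} := by
      apply Finset.ext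
      intro y
      simp only [Finset.mem_filter, Finset.mem_univ, true_and, Finset.mem_insert,
        Finset.mem_singleton]
      constructor
      · intro hy
        obtain ⟨v, hv⟩ : ∃ v : F, v = y ^ 2 + y + δ := ⟨_, rfl⟩
        have hv1 : ∑ i ∈ Finset.range (2 * m), v ^ (2 ^ i) = 1 := by rw [hv]; exact htrv y
        have hv0 : v ≠ 0 := hne0 v hv1
        obtain ⟨bb, hbb⟩ : ∃ bb : F, bb = v ^ E := ⟨_, rfl⟩
        have hbb0 : bb ≠ 0 := by rw [hbb]; exact pow_ne_zero _ hv0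
        have K1v : bb ^ q * v = bb ^ 2 := by rw [hbb]; exact hI1 v hv0
        have K2v : v ^ q * v ^ 2 = bb ^ 3 := by
          have h1 : (bb ^ q * v) ^ q = (bb ^ 2) ^ q := by rw [K1v]
          have h2' : bb * v ^ q = (bb ^ q) ^ 2 := by
            rw [mul_pow] at h1
            calc bb * v ^ q = (bb ^ q) ^ q * v ^ q := by rw [hQQ bb]
            _ = (bb ^ 2) ^ q := h1
            _ = (bb ^ q) ^ 2 := by rw [← pow_mul, ← pow_mul, mul_comm 2 q]
          have h3 : bb * (v ^ q * v ^ 2) = bb * bb ^ 3 := by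
            calc bb * (v ^ q * v ^ 2) = (bb * v ^ q) * v ^ 2 := by ring
            _ = (bb ^ q) ^ 2 * v ^ 2 := by rw [h2']
            _ = (bb ^ q * v) ^ 2 := by ring
            _ = (bb ^ 2) ^ 2 := by rw [K1v]
            _ = bb * bb ^ 3 := by ring
          exact mul_left_cancel₀ hbb0 h3
        have hyx : y = x + w + bb := by
          have hfy : f y = f x := hy.trans hx.symm
          rw [hf y, ← hv, ← hbb, hwx] at hfy
          linear_combination hfy - bb * h2
        have hvc : v + bb + bb ^ 2 = c := by
          rw [hc, hv, hyx, hu]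
          linear_combination (x * w + x * bb + w * bb + bb + bb ^ 2) * h2
        have hcqv : c ^ q = v ^ q + bb ^ q + (bb ^ q) ^ 2 := by
          have e1 : (bb ^ 2) ^ q = (bb ^ q) ^ 2 := by
            rw [← pow_mul, ← pow_mul, mul_comm 2 q]
          rw [← hvc, hFrq, hFrq, e1]
        have K3v : c ^ q * v ^ 2 = c * bb ^ 2 := by
          rw [hcqv, ← hvc]
          linear_combination K2v + v * K1v + (bb ^ q * v + bb ^ 2) * K1v
        have hc0q : c ^ q ≠ 0 := pow_ne_zero _ hc0
        have hsq : (u * bb) ^ 2 = (w * v) ^ 2 := by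
          refine mul_left_cancel₀ hc0q ?_
          calc c ^ q * (u * bb) ^ 2 = (c ^ q * u ^ 2) * bb ^ 2 := by ring
          _ = (c * w ^ 2) * bb ^ 2 := by rw [K3]
          _ = (c * bb ^ 2) * w ^ 2 := by ring
          _ = (c ^ q * v ^ 2) * w ^ 2 := by rw [K3v]
          _ = c ^ q * (w * v) ^ 2 := by ring
        have huv : u * bb = w * v := by
          have hfr : (u * bb - w * v) ^ 2 = 0 := by
            linear_combination hsq + ((w * v) ^ 2 - (u * bb) * (w * v)) * h2
          have h5 : u * bb - w * v = 0 := by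
            exact pow_eq_zero_iff (two_ne_zero) |>.mp hfr
          linear_combination h5
        have hfactor : (bb + w) * (w * bb + c) = 0 := by
          linear_combination w * hvc + huv + bb * hc + (bb * w ^ 2 + w * c) * h2
        rcases mul_eq_zero.mp hfactor with hcase | hcase
        · left
          have hbw : bb = w := by linear_combination hcase - w * h2
          rw [hyx, hbw]
          linear_combination w * h2
        · right
          rw [hyx, hy']
          have hbbb' : bb = b' := by
            have h6 : bb * w = c := by linear_combination hcase - c * h2
            have h7 : bb * w = b' * w := by rw [h6, hb'w]
            exact mul_right_cancel₀ hw0 h7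
          rw [hbbb']
      · intro hy
        rcases hy with rfl | rfl
        · exact hx
        · have hwq0 : w ^ q ≠ 0 := pow_ne_zero _ hw0
          have hv's : (c * u / w ^ 2) * b' ^ q = b' ^ 2 := by
            rw [hb', div_pow, div_pow]
            rw [div_mul_div_comm]
            rw [div_eq_div_iff (mul_ne_zero (pow_ne_zero 2 hw0) hwq0) (pow_ne_zero 2 hw0)]
            linear_combination c * w ^ 2 * K4
          have hv'e : (c * u / w ^ 2) ^ E = b' := hI2 b' hb'0 _ hv's
          have hy'v : y ^ 2 + y + δ = c * u / w ^ 2 := by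
            rw [eq_div_iff (pow_ne_zero 2 hw0), hy']
            linear_combination (c + w + w * b' + 2 * w ^ 2 + 2 * x * w) * hb'w
              + (c + 2 * w + 3 * w ^ 2 + 2 * x * w) * hc
              + (2 * w + 3 * w ^ 2 + 2 * x * w) * hu
              + (w * δ + w ^ 2 + 2 * w ^ 2 * δ + 3 * w ^ 3 + 2 * w ^ 4 + x * w + x * w * δ
                 + 3 * x * w ^ 2 + 2 * x * w ^ 3 + 2 * x ^ 2 * w + 2 * x ^ 2 * w ^ 2
                 + x ^ 3 * w) * h2
          rw [hf y, hy'v, hv'e, ← hx, hwx, hy']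
          linear_combination b' * h2
    rw [hset]
    exact Finset.card_pair hxy'
  · right
    rw [Finset.card_eq_zero, Finset.filter_eq_empty_iff]
    intro y _
    exact fun hy => hex ⟨y, hy⟩
end

section
/- Let m ∈ ℕ be even and δ ∈ F_{2^{2m}} with Tr_{2m}(δ) = 1. Then I(x) = (x² + x + δ)^{(2^{2m+1} - 2^m - 1)/3} + x + 1 is a fixed-point-free involution on F_{2^{2m}}. -/
open Finset

/-- For even `m` and `Tr_{2m}(δ) = 1`, `I(x) = (x²+x+δ)^{(2^{2m+1}-2^m-1)/3} + x + 1` is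
a fixed-point-free involution on `F_{2^{2m}}`. -/
theorem stmt16 {F : Type*} [Field F] [Fintype F] (m : ℕ)
    (hm : 0 < m) (hmeven : Even m)
    (hcard : Fintype.card F = 2 ^ (2 * m))
    (δ : F) (htr : ∑ i ∈ Finset.range (2 * m), δ ^ (2 ^ i) = 1)
    (I : F → F)
    (hI : ∀ x, I x = (x ^ 2 + x + δ) ^ ((2 ^ (2 * m + 1) - 2 ^ m - 1) / 3) + x + 1) :
    (∀ x : F, I (I x) = x) ∧ (∀ x : F, I x ≠ x) := by
  classical
  -- characteristic 2
  haveI : CharP F (ringChar F) := ringChar.charP F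
  obtain ⟨n, hp, hcard'⟩ := FiniteField.card F (ringChar F)
  have hp2 : ringChar F = 2 := by
    have hdvd : ringChar F ∣ 2 ^ (2 * m) := by
      rw [← hcard, hcard']
      exact dvd_pow_self _ (by positivity)
    exact (Nat.prime_dvd_prime_iff_eq hp Nat.prime_two).mp (hp.dvd_of_dvd_pow hdvd)
  haveI hchar : CharP F 2 := hp2 ▸ ringChar.charP F
  haveI : Fact (Nat.Prime 2) := ⟨Nat.prime_two⟩
  have h2z : (2 : F) = 0 := CharTwo.two_eq_zero
  -- the (absolute) trace
  set T : F → F := fun a => ∑ i ∈ Finset.range (2 * m), a ^ 2 ^ i with hT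
  have hpowQ : ∀ a : F, a ^ 2 ^ (2 * m) = a := by
    intro a; rw [← hcard]; exact FiniteField.pow_card a
  have hTadd : ∀ a b : F, T (a + b) = T a + T b := by
    intro a b
    simp only [hT, ← Finset.sum_add_distrib]
    exact Finset.sum_congr rfl fun i _ => add_pow_char_pow ..
  have hTsq : ∀ a : F, T (a ^ 2) = T a := by
    intro a
    have h1 : ∀ i : ℕ, (a ^ 2) ^ 2 ^ i = a ^ 2 ^ (i + 1) := by
      intro i; rw [← pow_mul, pow_succ, mul_comm (2 ^ i) 2]
    have e1 := Finset.sum_range_succ' (fun i => a ^ 2 ^ i) (2 * m)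
    have e2 := Finset.sum_range_succ (fun i => a ^ 2 ^ i) (2 * m)
    have h2 := e1.symm.trans e2
    rw [hpowQ a, pow_zero, pow_one] at h2
    have h3 := add_right_cancel h2
    simp only [hT, h1]
    exact h3
  have hTfix : ∀ a : F, a ^ 2 ^ m = a → T a = 0 := by
    intro a ha
    have hsplit : T a = (∑ i ∈ Finset.range m, a ^ 2 ^ i) +
        ∑ i ∈ Finset.range m, a ^ 2 ^ (m + i) := by
      simp only [hT, two_mul]
      exact Finset.sum_range_add _ m m
    have h3 : ∀ i : ℕ, a ^ 2 ^ (m + i) = a ^ 2 ^ i := by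
      intro i; rw [pow_add, pow_mul, ha]
    simp only [h3] at hsplit
    rw [hsplit]
    exact CharTwo.add_self_eq_zero _
  have hTδ : T δ = 1 := htr
  -- arithmetic of the exponent
  obtain ⟨t, ht⟩ : ∃ t, 2 ^ m = 3 * t + 1 := by
    obtain ⟨j, hj⟩ := hmeven
    have h4 : 2 ^ m = 4 ^ j := by rw [hj, ← two_mul, pow_mul]; norm_num
    have h5 : 4 ^ j % 3 = 1 := by rw [Nat.pow_mod]; norm_num
    exact ⟨2 ^ m / 3, by omega⟩
  set d : ℕ := (2 ^ (2 * m + 1) - 2 ^ m - 1) / 3 with hd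
  have h2m : 2 ^ (2 * m + 1) = 18 * t ^ 2 + 12 * t + 2 := by
    rw [pow_succ, two_mul, pow_add, ht]; ring
  have hdval : d = 6 * t ^ 2 + 3 * t := by rw [hd, h2m, ht]; omega
  have hQ : 2 ^ (2 * m) = 9 * t ^ 2 + 6 * t + 1 := by
    rw [two_mul, pow_add, ht]; ring
  -- key facts about u = y^d for y with T y = 1
  have key : ∀ y : F, T y = 1 →
      (y ^ d) ^ 2 ^ m * (y ^ d) = 1 ∧ (y ^ d) ^ 3 * y ^ 2 ^ m = y ∧ y ≠ 0 := by
    intro y hy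
    have hy0 : y ≠ 0 := by
      rintro rfl
      rw [hT] at hy
      simp only [zero_pow (pow_ne_zero _ two_ne_zero), Finset.sum_const_zero] at hy
      exact zero_ne_one hy
    have hy1 : y ^ (9 * t ^ 2 + 6 * t) = 1 := by
      have h6 := FiniteField.pow_card_sub_one_eq_one y hy0
      rw [hcard, hQ] at h6
      simpa using h6
    refine ⟨?_, ?_, hy0⟩
    · have h7 : (y ^ d) ^ 2 ^ m * y ^ d = y ^ (d * 2 ^ m + d) := by
        rw [← pow_mul, ← pow_add]
      have he : d * 2 ^ m + d = (9 * t ^ 2 + 6 * t) * (2 * t + 1) := by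
        rw [hdval, ht]; ring
      rw [h7, he, pow_mul, hy1, one_pow]
    · have h8 : (y ^ d) ^ 3 * y ^ 2 ^ m * y = y * y := by
        rw [← pow_mul, ← pow_add, ← pow_succ]
        have he : d * 3 + 2 ^ m + 1 = 2 ^ (2 * m) * 2 := by
          rw [hdval, hQ, ht]; ring
        rw [he, pow_mul, hpowQ, sq]
      exact mul_right_cancel₀ hy0 h8
  -- the main computation
  have keyY : ∀ y : F, T y = 1 → ((y ^ d) ^ 2 + y ^ d + y) ^ d = y ^ d := by
    intro y hy
    obtain ⟨h1, h2, hy0⟩ := key y hy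
    set u : F := y ^ d with hu
    have hu0 : u ≠ 0 := by rw [hu]; exact pow_ne_zero _ hy0
    have hyq0 : y ^ 2 ^ m ≠ 0 := pow_ne_zero _ hy0
    set Y : F := u ^ 2 + u + y with hY
    have hY0 : Y ≠ 0 := by
      intro h0
      rw [hY] at h0
      have hyval : y = u ^ 2 + u := by linear_combination h0 - (u ^ 2 + u) * h2z
      have hzero : T y = 0 := by
        rw [hyval, hTadd, hTsq]
        exact CharTwo.add_self_eq_zero _
      rw [hy] at hzero
      exact one_ne_zero hzero
    -- Frobenius of Y
    have hYq : Y ^ 2 ^ m = (u ^ 2 ^ m) ^ 2 + u ^ 2 ^ m + y ^ 2 ^ m := by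
      have e1 : Y ^ 2 ^ m = (u ^ 2 + u) ^ 2 ^ m + y ^ 2 ^ m := by
        rw [hY]; exact add_pow_char_pow ..
      have e2 : (u ^ 2 + u) ^ 2 ^ m = (u ^ 2) ^ 2 ^ m + u ^ 2 ^ m :=
        add_pow_char_pow ..
      have e3 : (u ^ 2) ^ 2 ^ m = (u ^ 2 ^ m) ^ 2 := by
        rw [pow_right_comm]
      rw [e1, e2, e3]
    -- the cross identity  Y^q * y = Y * y^q
    have hcross : Y ^ 2 ^ m * y = Y * y ^ 2 ^ m := by
      have hmul : Y ^ 2 ^ m * y * u ^ 2 = Y * y ^ 2 ^ m * u ^ 2 := by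
        rw [hYq, hY]
        linear_combination (y * (u ^ 2 ^ m * u + u + 1)) * h1 - (u + 1) * h2
      exact mul_right_cancel₀ (pow_ne_zero 2 hu0) hmul
    -- hence Y / y lies in the subfield F_q
    set c : F := Y * y⁻¹ with hc
    have hc0 : c ≠ 0 := mul_ne_zero hY0 (inv_ne_zero hy0)
    have hcq : c ^ 2 ^ m = c := by
      rw [hc, mul_pow, inv_pow, ← div_eq_mul_inv, ← div_eq_mul_inv,
        div_eq_div_iff hyq0 hy0]
      exact hcross
    have hc3t : c ^ (3 * t) = 1 := by
      rw [ht, pow_succ] at hcq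
      have h9 : c ^ (3 * t) * c = 1 * c := by rw [one_mul]; exact hcq
      exact mul_right_cancel₀ hc0 h9
    have hcd : c ^ d = 1 := by
      have he : d = 3 * t * (2 * t + 1) := by rw [hdval]; ring
      rw [he, pow_mul, hc3t, one_pow]
    have hYcy : Y = c * y := by
      rw [hc]; field_simp
    calc Y ^ d = (c * y) ^ d := by rw [← hYcy]
      _ = c ^ d * y ^ d := mul_pow ..
      _ = y ^ d := by rw [hcd, one_mul]
  -- trace of x^2 + x + δ is 1
  have hTy : ∀ x : F, T (x ^ 2 + x + δ) = 1 := by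
    intro x
    rw [hTadd, hTadd, hTsq, hTδ, CharTwo.add_self_eq_zero, zero_add]
  -- conclusions
  constructor
  · intro x
    set y : F := x ^ 2 + x + δ with hy
    set u : F := y ^ d with hu
    have hIx : I x = u + x + 1 := by rw [hI x, ← hy, ← hu]
    have hstep : (I x) ^ 2 + I x + δ = u ^ 2 + u + y := by
      rw [hIx]
      linear_combination (u * x + u + x + 1) * h2z - hy
    have hkey := keyY y (hTy x)
    rw [← hu] at hkey
    rw [hI (I x), hstep, hkey, hIx]
    linear_combination (u + 1) * h2z
  · intro x hfix
    set y : F := x ^ 2 + x + δ with hy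
    set u : F := y ^ d with hu
    have hIx : I x = u + x + 1 := by rw [hI x, ← hy, ← hu]
    have hu1 : u = 1 := by
      rw [hIx] at hfix
      linear_combination hfix - h2z
    obtain ⟨h1, h2, hy0⟩ := key y (hTy x)
    rw [← hu, hu1, one_pow, one_mul] at h2
    have h0 : T y = 0 := hTfix y h2
    have hTy1 : T y = 1 := hTy x
    rw [hTy1] at h0
    exact one_ne_zero h0
end

section
/- Let m ∈ ℕ and θ ∈ F_{2^{2m}} with θ^{2^m+1} = 1 and θ ≠ 1. Then the map ψ(x) = (1 + θx)/(θ + x) is a bijection from μ*_{2^m+1} \ {θ} to F_{2^m} \ {1}, where μ*_{2^m+1} = {x ∈ F_{2^{2m}} : x^{2^m+1} = 1, x ≠ 1}. -/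
/-- For `θ ∈ μ*_{2^m+1}`, `ψ(x) = (1 + θx)/(θ + x)` is a bijection from
`μ*_{2^m+1} \ {θ}` to `F_{2^m} \ {1}`. -/
theorem stmt18 {F : Type*} [Field F] [Fintype F] (m : ℕ)
    (hm : 0 < m)
    (hcard : Fintype.card F = 2 ^ (2 * m))
    (θ : F) (hθ1 : θ ^ (2 ^ m + 1) = 1) (hθ2 : θ ≠ 1) :
    Set.BijOn (fun x => (1 + θ * x) / (θ + x))
      {x : F | x ^ (2 ^ m + 1) = 1 ∧ x ≠ 1 ∧ x ≠ θ}
      {y : F | y ^ (2 ^ m) = y ∧ y ≠ 1} := by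
  have hchar : ringChar F = 2 := by
    obtain ⟨n, hp, hc⟩ := FiniteField.card F (ringChar F)
    have hdvd : ringChar F ∣ 2 ^ (2 * m) := by
      rw [← hcard, hc]; exact dvd_pow_self _ n.2.ne'
    exact (Nat.prime_dvd_prime_iff_eq hp Nat.prime_two).mp (hp.dvd_of_dvd_pow hdvd)
  haveI : CharP F 2 := hchar ▸ ringChar.charP F
  haveI : Fact (Nat.Prime 2) := ⟨Nat.prime_two⟩
  have htwo : (2 : F) = 0 := CharTwo.two_eq_zero
  have haddeq : ∀ a b : F, a + b = 0 → a = b := by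
    intro a b h
    have : a = -b := eq_neg_of_add_eq_zero_left h
    rwa [CharTwo.neg_eq] at this
  have hfrob : ∀ x y : F, (x + y) ^ (2 ^ m) = x ^ (2 ^ m) + y ^ (2 ^ m) := fun x y =>
    add_pow_char_pow x y 2 m
  set q := 2 ^ m with hqdef
  have hθ0 : θ ≠ 0 := by
    intro h; rw [h, zero_pow (by positivity)] at hθ1; exact zero_ne_one hθ1
  have hθq : θ ^ q * θ = 1 := by rw [← pow_succ]; exact hθ1
  have hθ1ne : θ + 1 ≠ 0 := fun h => hθ2 (haddeq θ 1 h)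
  have hθq' : θ ^ q = θ⁻¹ := eq_inv_of_mul_eq_one_left hθq
  have hθsq : θ * θ ≠ 1 := by
    intro h
    have h2 : (θ + 1) * (θ + 1) = 0 := by linear_combination h + (θ + 1) * htwo
    exact hθ1ne (mul_self_eq_zero.mp h2)
  have hden : ∀ x : F, x ≠ θ → θ + x ≠ 0 := fun x hx h => hx ((haddeq θ x h).symm)
  constructor
  · -- MapsTo
    rintro x ⟨hx1, hx2, hx3⟩
    have hx0 : x ≠ 0 := by
      intro h; rw [h, zero_pow (by positivity)] at hx1; exact zero_ne_one hx1
    have hxq : x ^ q * x = 1 := by rw [← pow_succ]; exact hx1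
    have hd : θ + x ≠ 0 := hden x hx3
    have hθx : θ * x ≠ 0 := mul_ne_zero hθ0 hx0
    refine ⟨?_, ?_⟩
    · show ((1 + θ * x) / (θ + x)) ^ q = (1 + θ * x) / (θ + x)
      have h1 : (1 + θ ^ q * x ^ q) * (θ * x) = θ * x + 1 := by
        linear_combination (x ^ q * x) * hθq + hxq
      have h2 : (θ ^ q + x ^ q) * (θ * x) = x + θ := by
        linear_combination x * hθq + θ * hxq
      calc ((1 + θ * x) / (θ + x)) ^ q
          = (1 + θ ^ q * x ^ q) / (θ ^ q + x ^ q) := by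
            rw [div_pow, hfrob, mul_pow, one_pow, hfrob]
        _ = ((1 + θ ^ q * x ^ q) * (θ * x)) / ((θ ^ q + x ^ q) * (θ * x)) := by
            rw [mul_div_mul_right _ _ hθx]
        _ = (θ * x + 1) / (x + θ) := by rw [h1, h2]
        _ = (1 + θ * x) / (θ + x) := by rw [add_comm (θ * x), add_comm x]
    · show (1 + θ * x) / (θ + x) ≠ 1
      intro h
      rw [div_eq_one_iff_eq hd] at h
      have h2 : (θ + 1) * (x + 1) = 0 := by linear_combination h + (θ + x) * htwo
      rcases mul_eq_zero.mp h2 with h' | h'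
      · exact hθ1ne h'
      · exact hx2 (haddeq x 1 h')
  refine ⟨?_, ?_⟩
  · -- InjOn
    rintro x ⟨hx1, hx2, hx3⟩ y ⟨hy1, hy2, hy3⟩ hxy
    simp only at hxy
    have hdx : θ + x ≠ 0 := hden x hx3
    have hdy : θ + y ≠ 0 := hden y hy3
    rw [div_eq_div_iff hdx hdy] at hxy
    have key : (θ + 1) ^ 2 * (x - y) = 0 := by
      linear_combination hxy + (θ + 1) * (x - y) * htwo
    rcases mul_eq_zero.mp key with h | h
    · exact absurd (pow_eq_zero_iff (by norm_num) |>.mp h) hθ1ne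
    · exact sub_eq_zero.mp h
  · -- SurjOn
    rintro y ⟨hy1, hy2⟩
    have hdy : θ + y ≠ 0 := by
      intro h
      have hyθ : y = θ := (haddeq θ y h).symm
      rw [hyθ] at hy1
      have := hθq
      rw [hy1] at this
      exact hθsq this
    have hny : 1 + θ * y ≠ 0 := by
      intro h
      have hyv : θ * y = 1 := (haddeq 1 (θ * y) h).symm
      have hyθ : y = θ⁻¹ := eq_inv_of_mul_eq_one_right hyv
      rw [hyθ, inv_pow, hθq', inv_inv] at hy1
      have : θ * θ = 1 := by
        nth_rewrite 2 [hy1]; exact mul_inv_cancel₀ hθ0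
      exact hθsq this
    set x := (1 + θ * y) / (θ + y) with hxdef
    have hx0 : x ≠ 0 := div_ne_zero hny hdy
    have h1 : (1 + θ ^ q * y) * θ = θ + y := by linear_combination y * hθq
    have h2 : (θ ^ q + y) * θ = 1 + θ * y := by linear_combination hθq
    have hdq : θ ^ q + y ≠ 0 := by
      intro h
      apply hny
      rw [← h2, h, zero_mul]
    have hxq : x ^ q = x⁻¹ := by
      calc x ^ q = (1 + θ ^ q * y) / (θ ^ q + y) := by
            rw [hxdef, div_pow, hfrob, mul_pow, one_pow, hfrob, hy1]
        _ = ((1 + θ ^ q * y) * θ) / ((θ ^ q + y) * θ) := by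
            rw [mul_div_mul_right _ _ hθ0]
        _ = (θ + y) / (1 + θ * y) := by rw [h1, h2]
        _ = x⁻¹ := by rw [hxdef, inv_div]
    have hx1' : x ^ (q + 1) = 1 := by rw [pow_succ, hxq, inv_mul_cancel₀ hx0]
    have hx' : x * (θ + y) = 1 + θ * y := div_mul_cancel₀ _ hdy
    have hxne1 : x ≠ 1 := by
      intro h
      rw [h, one_mul] at hx'
      have h2' : (θ + 1) * (y + 1) = 0 := by linear_combination -hx' + (θ + y) * htwo
      rcases mul_eq_zero.mp h2' with h' | h'
      · exact hθ1ne h'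
      · exact hy2 (haddeq y 1 h')
    have hxneθ : x ≠ θ := by
      intro h
      rw [h] at hx'
      have h2' : (θ + 1) * (θ + 1) = 0 := by
        linear_combination hx' + (θ + 1) * htwo
      exact hθ1ne (mul_self_eq_zero.mp h2')
    refine ⟨x, ⟨hx1', hxne1, hxneθ⟩, ?_⟩
    show (1 + θ * x) / (θ + x) = y
    have hdx : θ + x ≠ 0 := hden x hxneθ
    rw [div_eq_iff hdx]
    have key : (θ + y) * ((1 + θ * x) - y * (θ + x)) = 0 := by
      linear_combination (θ - y) * hx' + (θ - θ * y ^ 2) * htwo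
    rcases mul_eq_zero.mp key with h | h
    · exact absurd h hdy
    · linear_combination h
end

section
/- For m ∈ ℕ, the map I: F_{2^{2m+1}} → F_{2^{2m+1}} given by I(x) = x^{2^{2m+1} - 2^{m+1} + 1} + x^{2^{m+1} - 1} + x + 1 is an involution on F_{2^{2m+1}}, i.e., I(I(x)) = x for all x. -/
/-- `I(x) = x^{2^{2m+1}-2^{m+1}+1} + x^{2^{m+1}-1} + x + 1` is an involution on
`F_{2^{2m+1}}`. -/
theorem stmt19 {F : Type*} [Field F] [Fintype F] (m : ℕ)
    (hcard : Fintype.card F = 2 ^ (2 * m + 1))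
    (I : F → F)
    (hI : ∀ x, I x = x ^ (2 ^ (2 * m + 1) - 2 ^ (m + 1) + 1) + x ^ (2 ^ (m + 1) - 1) + x + 1) :
    ∀ x : F, I (I x) = x := by
  set q : ℕ := 2 ^ (2 * m + 1) with hq_def
  set s : ℕ := 2 ^ (m + 1) with hs_def
  -- characteristic 2
  haveI hrc := ringChar.charP F
  obtain ⟨n, hp, hcn⟩ := FiniteField.card F (ringChar F)
  have hring2 : ringChar F = 2 := by
    have hdvd : ringChar F ∣ 2 ^ (2 * m + 1) := by
      rw [← hq_def, ← hcard, hcn]; exact dvd_pow_self _ n.pos.ne'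
    exact (Nat.prime_dvd_prime_iff_eq hp Nat.prime_two).mp (hp.dvd_of_dvd_pow hdvd)
  haveI hp2 : CharP F 2 := hring2 ▸ hrc
  have h2 : (2 : F) = 0 := CharP.cast_eq_zero F 2
  -- basic arithmetic
  have hs1 : 2 ≤ s := by
    have : 2 ^ 1 ≤ 2 ^ (m + 1) := Nat.pow_le_pow_right (by norm_num) (by omega)
    simpa using this
  have hq1 : 1 ≤ q := Nat.one_le_two_pow
  have hsq : s ≤ q := Nat.pow_le_pow_right (by norm_num) (by omega)
  have hss : s * s = 2 * q := by
    rw [hs_def, hq_def, ← pow_add, ← pow_succ']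
    congr 1; omega
  -- powers
  have hxq : ∀ y : F, y ^ q = y := fun y => by
    rw [← hcard]; exact FiniteField.pow_card y
  have hss2 : ∀ y : F, y ^ (s * s) = y ^ 2 := fun y => by
    rw [hss, mul_comm, pow_mul, hxq]
  have hstep : ∀ (y : F) (a : ℕ), 1 ≤ a → y ^ (a + (q - 1)) = y ^ a := by
    intro y a ha
    have h : a + (q - 1) = (a - 1) + q := by omega
    rw [h, pow_add, hxq, ← pow_succ]
    congr 1; omega
  have hred : ∀ (y : F) (a k : ℕ), 1 ≤ a → y ^ (a + k * (q - 1)) = y ^ a := by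
    intro y a k ha
    induction k with
    | zero => simp
    | succ k ih =>
      have h : a + (k + 1) * (q - 1) = (a + k * (q - 1)) + (q - 1) := by ring
      rw [h, hstep y _ (by omega), ih]
  -- Frobenius
  haveI hf2 : Fact (Nat.Prime 2) := ⟨Nat.prime_two⟩
  have hfrob : ∀ a b : F, (a + b) ^ s = a ^ s + b ^ s := fun a b => by
    rw [hs_def]; exact add_pow_char_pow a b 2 (m + 1)
  -- Key identity 1, for all y
  have expand : ∀ (y : F) (a b : ℕ), y ^ (1 + a + b) = y * y ^ a * y ^ b := by
    intro y a b; rw [pow_add, pow_add, pow_one]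
  have K1 : ∀ y : F, y * y ^ s * I y =
      y ^ 3 + (y ^ s) ^ 2 + y ^ 2 * y ^ s + y * y ^ s := by
    intro y
    rw [hI y]
    have e1 : y * y ^ s * y ^ (q - s + 1) = y ^ 3 := by
      calc y * y ^ s * y ^ (q - s + 1) = y ^ (1 + s + (q - s + 1)) :=
            (expand y s (q - s + 1)).symm
        _ = y ^ (2 + q) := by congr 1; omega
        _ = y ^ 2 * y ^ q := pow_add y 2 q
        _ = y ^ 3 := by rw [hxq]; ring
    have e2 : y * y ^ s * y ^ (s - 1) = (y ^ s) ^ 2 := by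
      calc y * y ^ s * y ^ (s - 1) = y ^ (1 + s + (s - 1)) :=
            (expand y s (s - 1)).symm
        _ = y ^ (s * 2) := by congr 1; omega
        _ = (y ^ s) ^ 2 := pow_mul y s 2
    calc y * y ^ s * (y ^ (q - s + 1) + y ^ (s - 1) + y + 1)
        = y * y ^ s * y ^ (q - s + 1) + y * y ^ s * y ^ (s - 1)
          + y ^ 2 * y ^ s + y * y ^ s := by ring
      _ = y ^ 3 + (y ^ s) ^ 2 + y ^ 2 * y ^ s + y * y ^ s := by rw [e1, e2]
  -- I 0 = 1
  have hI0 : I 0 = 1 := by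
    rw [hI 0, zero_pow (by omega : q - s + 1 ≠ 0), zero_pow (by omega : s - 1 ≠ 0)]
    ring
  intro x
  by_cases hx0 : x = 0
  · subst hx0
    rw [hI0, hI 1, one_pow, one_pow]
    linear_combination 2 * h2
  -- x ≠ 0
  set u : F := x ^ s with hu_def
  have hu : u ≠ 0 := pow_ne_zero s hx0
  set c : F := I x with hc_def
  have K1x : x * u * c = x ^ 3 + u ^ 2 + x ^ 2 * u + x * u := K1 x
  by_cases hc0 : c = 0
  · -- then x = 1
    have hfac : (x + u) * (x ^ 2 + u) = 0 := by
      rw [hc0, mul_zero] at K1x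
      linear_combination -K1x
    have hx1 : x = 1 := by
      rcases mul_eq_zero.mp hfac with h | h
      · have hux : x ^ s = x := by
          rw [← hu_def]; linear_combination h - x * h2
        have hxx : x ^ 2 = x := by
          calc x ^ 2 = x ^ (s * s) := (hss2 x).symm
            _ = (x ^ s) ^ s := pow_mul x s s
            _ = x ^ s := by conv_lhs => rw [hux]
            _ = x := hux
        have := mul_left_cancel₀ hx0 (show x * x = x * 1 by linear_combination hxx)
        exact this
      · have hux : x ^ s = x ^ 2 := by
          rw [← hu_def]; linear_combination h - x ^ 2 * h2
        have hxx : x ^ 2 = x ^ 4 := by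
          calc x ^ 2 = x ^ (s * s) := (hss2 x).symm
            _ = (x ^ s) ^ s := pow_mul x s s
            _ = (x ^ 2) ^ s := by rw [hux]
            _ = (x ^ s) ^ 2 := pow_right_comm x 2 s
            _ = x ^ 4 := by rw [hux]; ring
        have hx21 : x ^ 2 = 1 := by
          have h4 := mul_left_cancel₀ (pow_ne_zero 2 hx0)
            (show x ^ 2 * x ^ 2 = x ^ 2 * 1 by linear_combination -hxx)
          linear_combination h4
        have hsub : (x - 1) ^ 2 = 0 := by linear_combination hx21 - x * h2 + h2
        have h1 := pow_eq_zero_iff (two_ne_zero) |>.mp hsub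
        exact sub_eq_zero.mp h1
    rw [hc0, hI0, hx1]
  · -- main case
    set d : F := c ^ s with hd_def
    have hd : d ≠ 0 := pow_ne_zero s hc0
    -- Key identity 2
    have K2x : x ^ 2 * u * d = u ^ 3 + x ^ 4 + x ^ 2 * u ^ 2 + x ^ 2 * u := by
      have hdexp : d = x ^ ((q - s + 1) * s) + x ^ ((s - 1) * s) + u + 1 := by
        rw [hd_def, hc_def, hI x, hfrob, hfrob, hfrob, one_pow, ← pow_mul, ← pow_mul]
      have t1 : x ^ 2 * u * x ^ ((q - s + 1) * s) = u ^ 3 := by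
        have harith : 2 + s + (q - s + 1) * s = s * 3 + (s - 2) * (q - 1) := by
          zify [hsq, hs1, hq1]
          have hss' : (s : ℤ) * s = 2 * q := by exact_mod_cast hss
          linear_combination -hss'
        calc x ^ 2 * u * x ^ ((q - s + 1) * s)
            = x ^ (2 + s + (q - s + 1) * s) := by
              rw [hu_def, ← pow_add, ← pow_add]
          _ = x ^ (s * 3 + (s - 2) * (q - 1)) := by rw [harith]
          _ = x ^ (s * 3) := hred x (s * 3) (s - 2) (by omega)
          _ = u ^ 3 := by rw [hu_def]; exact pow_mul x s 3
      have t2 : x ^ 2 * u * x ^ ((s - 1) * s) = x ^ 4 := by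
        have harith : 2 + s + (s - 1) * s = 2 + 2 * q := by
          zify [hsq, hs1, hq1, (by omega : 1 ≤ s)]
          have hss' : (s : ℤ) * s = 2 * q := by exact_mod_cast hss
          linear_combination hss'
        calc x ^ 2 * u * x ^ ((s - 1) * s)
            = x ^ (2 + s + (s - 1) * s) := by rw [hu_def, ← pow_add, ← pow_add]
          _ = x ^ (2 + 2 * q) := by rw [harith]
          _ = x ^ 2 * (x ^ q) ^ 2 := by rw [pow_add, mul_comm 2 q, pow_mul]
          _ = x ^ 2 * x ^ 2 := by rw [hxq]
          _ = x ^ 4 := by ring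
      calc x ^ 2 * u * d
          = x ^ 2 * u * x ^ ((q - s + 1) * s) + x ^ 2 * u * x ^ ((s - 1) * s)
            + x ^ 2 * u ^ 2 + x ^ 2 * u := by rw [hdexp]; ring
        _ = u ^ 3 + x ^ 4 + x ^ 2 * u ^ 2 + x ^ 2 * u := by rw [t1, t2]
    -- Key identity 3 : K1 applied to c
    have K3 : c * d * I c = c ^ 3 + d ^ 2 + c ^ 2 * d + c * d := by
      have := K1 c; rw [← hd_def] at this; exact this
    -- final algebra
    have hxu7 : (x ^ 7 * u ^ 5 : F) ≠ 0 := mul_ne_zero (pow_ne_zero 7 hx0) (pow_ne_zero 5 hu)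
    have hgoal2 : x ^ 7 * u ^ 5 * (c ^ 3 + d ^ 2 + c ^ 2 * d + c * d)
        = x ^ 7 * u ^ 5 * (c * d * x) := by
      linear_combination
        (x ^ 4 * u ^ 2 * ((x * u * c) ^ 2 + (x * u * c) * (x ^ 3 + u ^ 2 + x ^ 2 * u + x * u)
            + (x ^ 3 + u ^ 2 + x ^ 2 * u + x * u) ^ 2)
          + x ^ 3 * u ^ 2 * (u ^ 3 + x ^ 4 + x ^ 2 * u ^ 2 + x ^ 2 * u)
            * ((x * u * c) + (x ^ 3 + u ^ 2 + x ^ 2 * u + x * u))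
          + x ^ 4 * u ^ 3 * (u ^ 3 + x ^ 4 + x ^ 2 * u ^ 2 + x ^ 2 * u)
          - x ^ 5 * u ^ 3 * (u ^ 3 + x ^ 4 + x ^ 2 * u ^ 2 + x ^ 2 * u)) * K1x
        + (x ^ 3 * u ^ 3 * ((x ^ 2 * u * d) + (u ^ 3 + x ^ 4 + x ^ 2 * u ^ 2 + x ^ 2 * u))
          + x ^ 3 * u ^ 2 * (x * u * c) ^ 2
          + x ^ 4 * u ^ 3 * (x * u * c)
          - x ^ 5 * u ^ 3 * (x * u * c)) * K2x
        + (x ^ 3 * u ^ 9 + 2 * x ^ 4 * u ^ 8 + 4 * x ^ 5 * u ^ 7 + 2 * x ^ 5 * u ^ 8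
          + 3 * x ^ 6 * u ^ 6 + 5 * x ^ 6 * u ^ 7 + 2 * x ^ 7 * u ^ 5 + 10 * x ^ 7 * u ^ 6
          + x ^ 7 * u ^ 7 + 8 * x ^ 8 * u ^ 5 + 4 * x ^ 8 * u ^ 6 + 5 * x ^ 9 * u ^ 4
          + 8 * x ^ 9 * u ^ 5 + 7 * x ^ 10 * u ^ 4 + x ^ 10 * u ^ 5 + 4 * x ^ 11 * u ^ 3
          + 2 * x ^ 11 * u ^ 4 + 2 * x ^ 12 * u ^ 3 + x ^ 13 * u ^ 2) * h2
    have hgoal : c * d * I c = c * d * x := by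
      rw [K3]
      exact mul_left_cancel₀ hxu7 hgoal2
    exact mul_left_cancel₀ (mul_ne_zero hc0 hd) hgoal
end
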